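/- arXiv:1412.8207 — 6 statements merged into one kernel-verified Lean document; each statement's English description precedes it below -/
import Mathlib

section
/- Let (Γ, μ) be a proper resistive network with Γ connected, let k, ℓ be vertices, and let v ∈ ℝ^{Vert(Γ)} satisfy Lv = e_k − e_ℓ. Then for every oriented edge e : i → j, the current (v_i − v_j)/μ(e) along e equals (Σ_{T ∈ T(Γ)} μ(Ed(Γ)∖T) · I_{Γ|_T}(e : i → j)) / (Σ_{T ∈ T(Γ)} μ(Ed(Γ)∖T)), where I_{Γ|_T}(e : i → j) is +1 if e belongs to T and the unique path in Γ|_T from k to ℓ traverses e from i to j, −1 if it traverses e from j to i, and 0 otherwise. In particular the current along every edge lies between −1 and 1. -/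
open Classical
open scoped BigOperators

/-- A graph: a finite set of vertices, a finite set of edges, and a map assigning to
each edge its unordered pair of endpoints (loops and parallel edges allowed). -/
structure ResGraph where
  V : Type
  E : Type
  [fintV : Fintype V]
  [decV : DecidableEq V]
  [fintE : Fintype E]
  [decE : DecidableEq E]
  ends : E → Sym2 V

attribute [instance] ResGraph.fintV ResGraph.decV ResGraph.fintE ResGraph.decE

namespace ResGraph

variable (G : ResGraph)

/-- The Laplacian of the resistive network `(G, μ)` applied to a voltage assignment `v`:
`(L v) i = Σ_j Σ_{edges e : i → j} (v i − v j) / μ e`. -/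
noncomputable def lap (μ : G.E → ℝ) (v : G.V → ℝ) : G.V → ℝ := fun i =>
  ∑ j : G.V, ∑ e : G.E, if G.ends e = s(i, j) then (v i - v j) / μ e else 0

/-- `i` and `j` are joined by an edge belonging to `F`. -/
def Adj (F : Set G.E) (i j : G.V) : Prop := ∃ e ∈ F, G.ends e = s(i, j)

/-- `i` and `j` lie in the same connected component of the subgraph `Γ|_F`
(the subgraph with all vertices of `Γ` and edge set `F`). -/
def Reach (F : Set G.E) (i j : G.V) : Prop := Relation.EqvGen (G.Adj F) i j

/-- The subgraph `Γ|_F` is connected. -/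
def ConnOn (F : Set G.E) : Prop := ∀ i j : G.V, G.Reach F i j

/-- The graph `G` is connected. -/
def Connected : Prop := G.ConnOn Set.univ

/-- The set of connected components of the subgraph `Γ|_F`. -/
def Comp (F : Set G.E) : Type := Quotient (Relation.EqvGen.setoid (G.Adj F))

/-- A walk from `i` to `j`: a finite sequence of vertices together with a choice of an
edge from each vertex to the next. -/
inductive Walk : G.V → G.V → Type
  | nil (i : G.V) : Walk i i
  | cons {i j k : G.V} (e : G.E) (he : G.ends e = s(i, j)) (w : Walk j k) : Walk i k

namespace Walk

variable {G}

/-- The list of vertices visited by a walk, in order (starting vertex first). -/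
def vertices : ∀ {i j : G.V}, G.Walk i j → List G.V
  | _, _, .nil a => [a]
  | _, _, @Walk.cons _ a _ _ _ _ w => a :: vertices w

/-- The list of edges traversed by a walk, in order. -/
def edges : ∀ {i j : G.V}, G.Walk i j → List G.E
  | _, _, .nil _ => []
  | _, _, .cons e _ w => e :: edges w

/-- The list of steps `(source, edge, target)` of a walk. -/
def steps : ∀ {i j : G.V}, G.Walk i j → List (G.V × G.E × G.V)
  | _, _, .nil _ => []
  | _, _, @Walk.cons _ a b _ e _ w => (a, e, b) :: steps w

/-- All edges of the walk lie in the edge set `F`. -/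
def In {i j : G.V} (w : G.Walk i j) (F : Set G.E) : Prop := ∀ e ∈ w.edges, e ∈ F

/-- A path: a walk all of whose vertices are distinct, except possibly the start and the
end vertex (and which does not traverse any edge twice). -/
def IsPath {i j : G.V} (w : G.Walk i j) : Prop :=
  w.vertices.dropLast.Nodup ∧ w.vertices.tail.Nodup ∧ w.edges.Nodup

/-- Change the (definitionally equal) endpoints of a walk. -/
def copy : ∀ {i j i' j' : G.V}, G.Walk i j → i = i' → j = j' → G.Walk i' j'
  | _, _, _, _, w, rfl, rfl => w

variable (G)

end Walk

/-- `F` is cycle-free: the subgraph `Γ|_F` contains no cycle, i.e. every closed path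
with edges in `F` is trivial. -/
def CycleFree (F : Set G.E) : Prop :=
  ∀ (i : G.V) (w : G.Walk i i), w.In F → w.IsPath → w.edges = []

/-- `T` is a spanning tree of `G`: the subgraph `Γ|_T` is connected and cycle-free. -/
def IsSpanningTree (T : Set G.E) : Prop := G.ConnOn T ∧ G.CycleFree T

/-- `F` is a 2-forest: `Γ|_F` is cycle-free with exactly two connected components. -/
def IsTwoForest (F : Set G.E) : Prop := G.CycleFree F ∧ Nat.card (G.Comp F) = 2

/-- `M` is a maximal forest of the subgraph `Γ|_S`: it is a cycle-free subset of `S`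
containing a spanning tree of each connected component of `Γ|_S` (equivalently,
inducing the same connected components as `S`). -/
def IsMaxForestOf (M S : Set G.E) : Prop :=
  M ⊆ S ∧ G.CycleFree M ∧ ∀ i j : G.V, G.Reach S i j ↔ G.Reach M i j

/-- The sign `σ(i,j;k,ℓ;F)` attached to a 2-forest `F`: `+1` if one component of `Γ|_F`
contains `i` and `k` and the other contains `j` and `ℓ`; `-1` if one component contains
`i` and `ℓ` and the other contains `j` and `k`; `0` otherwise. -/
noncomputable def sigma2 (F : Set G.E) (i j k l : G.V) : ℝ :=
  if ¬ G.Reach F i j ∧ G.Reach F i k ∧ G.Reach F j l then 1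
  else if ¬ G.Reach F i j ∧ G.Reach F i l ∧ G.Reach F j k then -1
  else 0

end ResGraph

namespace ResGraph

variable (G : ResGraph)

/-- An oriented edge: an edge together with an ordering of its endpoints. -/
def OEdge : Type := {x : G.E × G.V × G.V // G.ends x.1 = s(x.2.1, x.2.2)}

noncomputable instance : Fintype G.OEdge := Subtype.fintype _

namespace OEdge

variable {G}

/-- The underlying edge of an oriented edge. -/
def edge (o : G.OEdge) : G.E := o.1.1

/-- The source of an oriented edge. -/
def src (o : G.OEdge) : G.V := o.1.2.1

/-- The target of an oriented edge. -/
def tgt (o : G.OEdge) : G.V := o.1.2.2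

/-- The reversal of an oriented edge. -/
def rev (o : G.OEdge) : G.OEdge := ⟨(o.1.1, o.1.2.2, o.1.2.1), o.2.trans Sym2.eq_swap⟩

end OEdge

/-- An edge current assignment: a real-valued function on oriented edges with
`I(e : i → j) = −I(e : j → i)`. -/
def IsCurrent (I : G.OEdge → ℝ) : Prop := ∀ o : G.OEdge, I o.rev = - I o

/-- The edge current assignment `I` is consistent with the vertex current assignment `D`:
for every vertex `i`, `Σ_j Σ_{edges e : i → j} I(e : i → j) = D i`. -/
def Consistent (I : G.OEdge → ℝ) (D : G.V → ℝ) : Prop :=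
  ∀ x : G.V, (∑ o ∈ Finset.univ.filter (fun o : G.OEdge => o.src = x), I o) = D x

lemma exists_oedge (e : G.E) : ∃ o : G.OEdge, o.edge = e := by
  have h : ∀ z : Sym2 G.V, G.ends e = z → ∃ o : G.OEdge, o.edge = e := by
    refine Sym2.ind (fun a b h => ?_)
    exact ⟨⟨(e, a, b), h⟩, rfl⟩
  exact h (G.ends e) rfl

/-- A choice of orientation for each edge. -/
noncomputable def orient (e : G.E) : G.OEdge := Classical.choose (G.exists_oedge e)

lemma orient_edge (e : G.E) : (G.orient e).edge = e := Classical.choose_spec (G.exists_oedge e)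

/-- The power dissipated by an edge current assignment: `Σ_{e ∈ Ed(Γ)} μ(e) I(e)²`. -/
noncomputable def power (μ : G.E → ℝ) (I : G.OEdge → ℝ) : ℝ :=
  ∑ e : G.E, μ e * (I (G.orient e)) ^ 2

/-- The Green's function `g(Γ, μ; D, E) = Dᵀ v` for any `v` with `L v = E`
(for `Γ` connected, `μ` proper, and `D`, `E` zero-sum vectors, such a `v` exists and
`Dᵀ v` does not depend on the choice). -/
noncomputable def green (μ : G.E → ℝ) (D E : G.V → ℝ) : ℝ :=
  if h : ∃ v : G.V → ℝ, G.lap μ v = E then ∑ x : G.V, D x * Classical.choose h x else 0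

/-- The contracted graph `Γ/S`: identify the two endpoints of each edge in `S` and
delete the edges in `S`. -/
noncomputable def contract (S : Set G.E) : ResGraph :=
  letI : DecidableEq (Quotient (Relation.EqvGen.setoid (G.Adj S))) := Classical.decEq _
  letI : DecidablePred (· ∈ S) := Classical.decPred _
  { V := Quotient (Relation.EqvGen.setoid (G.Adj S))
    E := {e : G.E // e ∉ S}
    ends := fun e => (G.ends e.1).map (Quotient.mk (Relation.EqvGen.setoid (G.Adj S))) }

/-- The quotient map `[·] : Vert(Γ) → Vert(Γ/S)`. -/
noncomputable def cmk (S : Set G.E) (x : G.V) : (G.contract S).V :=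
  Quotient.mk (Relation.EqvGen.setoid (G.Adj S)) x

/-- The edge of `Γ` underlying an edge of `Γ/S` (recall `Ed(Γ/S) = Ed(Γ)∖S`). -/
noncomputable def cval (S : Set G.E) (e : (G.contract S).E) : G.E := e.1

/-- The subset of `Ed(Γ/S) = Ed(Γ)∖S` induced by a subset `F ⊆ Ed(Γ)`, namely `F∖S`. -/
noncomputable def cset (S : Set G.E) (F : Set G.E) : Set (G.contract S).E :=
  {e : (G.contract S).E | G.cval S e ∈ F}

/-- The linear map `[·] : ℝ^{Vert(Γ)} → ℝ^{Vert(Γ/S)}` sending the basis vector `e_i`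
to `e_{[i]}`. -/
noncomputable def pushVec (S : Set G.E) (D : G.V → ℝ) : (G.contract S).V → ℝ := fun x =>
  ∑ i ∈ Finset.univ.filter (fun i : G.V => G.cmk S i = x), D i

/-- Contraction of walks: delete from a walk in `Γ` the edges belonging to `S`,
obtaining a walk in `Γ/S`. -/
noncomputable def contractWalk (S : Set G.E) :
    ∀ {i j : G.V}, G.Walk i j → (G.contract S).Walk (G.cmk S i) (G.cmk S j)
  | _, _, .nil a => .nil (G.cmk S a)
  | _, _, @Walk.cons _ a b _ e he w =>
    if hS : e ∈ S then
      (contractWalk S w).copy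
        (Quotient.sound (Relation.EqvGen.rel b a ⟨e, hS, he.trans Sym2.eq_swap⟩)) rfl
    else
      Walk.cons (j := G.cmk S b) ⟨e, hS⟩
        (by show Sym2.map _ (G.ends e) = s(G.cmk S a, G.cmk S b)
            rw [he]
            exact Sym2.map_pair_eq _ a b) (contractWalk S w)

/-- The current `I_{Γ|_T}(e : i → j)` flowing along the oriented edge `e : i → j` when a
unit current from `k` to `ℓ` is imposed on the spanning tree `Γ|_T`: it is `+1` if `e ∈ T`
and the unique path in `Γ|_T` from `k` to `ℓ` traverses `e` from `i` to `j`, `−1` if it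
traverses `e` from `j` to `i`, and `0` otherwise. -/
noncomputable def treeCurrent (T : Set G.E) (k l : G.V) (e : G.E) (i j : G.V) : ℝ :=
  if e ∈ T ∧ ∃ w : G.Walk k l, w.IsPath ∧ w.In T ∧ (i, e, j) ∈ w.steps then 1
  else if e ∈ T ∧ ∃ w : G.Walk k l, w.IsPath ∧ w.In T ∧ (j, e, i) ∈ w.steps then -1
  else 0

/-- The extended Green's function on possibly improper resistances: contract the edges of
zero resistance and take the Green's function of the resulting proper network, with the
pushed-forward vertex vectors. -/
noncomputable def egreen (μ : G.E → ℝ) (D E : G.V → ℝ) : ℝ :=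
  (G.contract {e : G.E | μ e = 0}).green (fun e => μ (G.cval {e : G.E | μ e = 0} e))
    (G.pushVec {e : G.E | μ e = 0} D) (G.pushVec {e : G.E | μ e = 0} E)

end ResGraph

/-!
Summing over the 2-forests `F` separating `k` from `ℓ`, let
`u(x) = Σ_F μ(Ed(Γ) ∖ F) [x lies on the side of k]`. Adding an edge `e : i → j` to such an `F`
on which `i` and `j` lie on different sides gives exactly the spanning trees `T` whose `k`-`ℓ`
path uses `e`, with the sign `[i ∼ k] − [j ∼ k] = I_{Γ|_T}(e : i → j)`; hence
`u_i − u_j = μ(e) Σ_T μ(Ed(Γ) ∖ T) I_{Γ|_T}(e : i → j)`.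
Every tree current satisfies Kirchhoff's node law (its `k`-`ℓ` path telescopes), so
`L u = W (e_k − e_ℓ)` with `W = Σ_T μ(Ed(Γ) ∖ T) > 0`. By the maximum principle the kernel of `L`
on a connected proper network consists of constants, so `v − u / W` is constant, which gives the
formula; `|I_{Γ|_T}| ≤ 1` gives the bound.
-/

lemma Finset.prod_sdiff_eq_mul_prod_sdiff_insert {α M : Type*} [DecidableEq α] [CommMonoid M]
    (f : α → M) {s t : Finset α} {a : α} (hat : a ∈ t) (has : a ∉ s) :
    ∏ x ∈ t \ s, f x = f a * ∏ x ∈ t \ insert a s, f x := by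
  rw [Finset.sdiff_insert, Finset.mul_prod_erase _ _ (Finset.mem_sdiff.2 ⟨hat, has⟩)]

namespace ResGraph

variable {G : ResGraph} {F F' T : Set G.E} {a b c i j k l p q x y : G.V} {e : G.E} {μ : G.E → ℝ}

namespace Walk

@[simp] lemma vertices_cons (he : G.ends e = s(a, b)) (w : G.Walk b c) :
    (Walk.cons e he w).vertices = a :: w.vertices := rfl

@[simp] lemma edges_cons (he : G.ends e = s(a, b)) (w : G.Walk b c) :
    (Walk.cons e he w).edges = e :: w.edges := rfl

@[simp] lemma steps_cons (he : G.ends e = s(a, b)) (w : G.Walk b c) :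
    (Walk.cons e he w).steps = (a, e, b) :: w.steps := rfl

lemma in_cons_iff {he : G.ends e = s(a, b)} {w : G.Walk b c} :
    (Walk.cons e he w).In F ↔ e ∈ F ∧ w.In F := by
  simp [In]

lemma exists_vertices_eq_concat : ∀ {a b : G.V} (w : G.Walk a b), ∃ t, w.vertices = t ++ [b]
  | _, _, .nil a => ⟨[], rfl⟩
  | _, _, @Walk.cons _ a _ _ _ _ w => by
      obtain ⟨t, ht⟩ := exists_vertices_eq_concat w
      exact ⟨a :: t, by simp [ht]⟩

lemma start_mem_vertices : ∀ {a b : G.V} (w : G.Walk a b), a ∈ w.vertices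
  | _, _, .nil _ => List.mem_singleton_self _
  | _, _, .cons _ _ _ => List.mem_cons_self

lemma mem_vertices_of_mem_steps : ∀ {a b p q : G.V} {e : G.E} {w : G.Walk a b},
    (p, e, q) ∈ w.steps → p ∈ w.vertices ∧ q ∈ w.vertices
  | _, _, _, _, _, .nil _, h => by simp [steps] at h
  | _, _, _, _, _, .cons f hf w, h => by
      rcases List.mem_cons.1 h with h | h
      · simp only [Prod.mk.injEq] at h
        obtain ⟨rfl, rfl, rfl⟩ := h
        exact ⟨List.mem_cons_self, List.mem_cons_of_mem _ w.start_mem_vertices⟩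
      · exact (mem_vertices_of_mem_steps h).imp (List.mem_cons_of_mem _) (List.mem_cons_of_mem _)

lemma ends_of_mem_steps : ∀ {a b p q : G.V} {e : G.E} {w : G.Walk a b},
    (p, e, q) ∈ w.steps → G.ends e = s(p, q)
  | _, _, _, _, _, .nil _, h => by simp [steps] at h
  | _, _, _, _, _, .cons f hf w, h => by
      rcases List.mem_cons.1 h with h | h
      · simp only [Prod.mk.injEq] at h
        obtain ⟨rfl, rfl, rfl⟩ := h
        exact hf
      · exact ends_of_mem_steps h

lemma map_steps : ∀ {a b : G.V} (w : G.Walk a b), w.steps.map (fun s => s.2.1) = w.edges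
  | _, _, .nil _ => rfl
  | _, _, .cons e he w => by simp [map_steps w]

lemma mem_edges_iff_exists_mem_steps {w : G.Walk a b} :
    e ∈ w.edges ↔ ∃ p q, (p, e, q) ∈ w.steps := by
  simp [← w.map_steps]

lemma mem_edges_of_mem_steps {w : G.Walk a b} (h : (p, e, q) ∈ w.steps) : e ∈ w.edges :=
  mem_edges_iff_exists_mem_steps.2 ⟨p, q, h⟩

lemma steps_nodup {w : G.Walk a b} (h : w.edges.Nodup) : w.steps.Nodup := by
  rw [← w.map_steps] at h
  exact h.of_map _

lemma exists_split_of_mem_steps : ∀ {a b p q : G.V} {e : G.E} {w : G.Walk a b},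
    (p, e, q) ∈ w.steps →
      ∃ (w₁ : G.Walk a p) (w₂ : G.Walk q b), w.edges = w₁.edges ++ e :: w₂.edges
  | _, _, _, _, _, .nil _, h => by simp [steps] at h
  | _, _, _, _, _, .cons f hf w, h => by
      rcases List.mem_cons.1 h with h | h
      · simp only [Prod.mk.injEq] at h
        obtain ⟨rfl, rfl, rfl⟩ := h
        exact ⟨.nil _, w, rfl⟩
      · obtain ⟨w₁, w₂, hw⟩ := exists_split_of_mem_steps h
        exact ⟨.cons f hf w₁, w₂, by simp [hw, edges]⟩

lemma exists_suffix_of_mem_vertices : ∀ {a b x : G.V} (w : G.Walk a b), x ∈ w.vertices →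
    ∃ w' : G.Walk x b, w'.edges <:+ w.edges ∧ w'.vertices <:+ w.vertices
  | _, _, _, .nil _, hx => by
      obtain rfl := List.mem_singleton.1 hx
      exact ⟨.nil _, List.suffix_refl _, List.suffix_refl _⟩
  | _, _, x, @Walk.cons _ a _ _ e he w, hx => by
      by_cases hxa : x = a
      · subst hxa
        exact ⟨.cons e he w, List.suffix_refl _, List.suffix_refl _⟩
      · obtain ⟨w', he', hv'⟩ :=
          exists_suffix_of_mem_vertices w ((List.mem_cons.1 hx).resolve_left hxa)
        exact ⟨w', he'.trans (List.suffix_cons e _), hv'.trans (List.suffix_cons a _)⟩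

lemma edges_nodup_of_vertices_nodup : ∀ {a b : G.V} (w : G.Walk a b),
    w.vertices.Nodup → w.edges.Nodup
  | _, _, .nil _, _ => List.nodup_nil
  | _, _, @Walk.cons _ a _ _ e he w, hnd => by
      rw [vertices_cons, List.nodup_cons] at hnd
      refine List.nodup_cons.2 ⟨fun hew => ?_, edges_nodup_of_vertices_nodup w hnd.2⟩
      obtain ⟨p, q, hpq⟩ := mem_edges_iff_exists_mem_steps.1 hew
      have hpq' := mem_vertices_of_mem_steps hpq
      rcases Sym2.eq_iff.1 (he.symm.trans (ends_of_mem_steps hpq)) with ⟨rfl, -⟩ | ⟨rfl, -⟩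
      exacts [hnd.1 hpq'.1, hnd.1 hpq'.2]

lemma isPath_of_vertices_nodup {w : G.Walk a b} (h : w.vertices.Nodup) : w.IsPath :=
  ⟨h.sublist (List.dropLast_sublist _), h.sublist (List.tail_sublist _),
    edges_nodup_of_vertices_nodup w h⟩

end Walk

lemma Adj.symm (h : G.Adj F a b) : G.Adj F b a :=
  let ⟨e, heF, he⟩ := h
  ⟨e, heF, he.trans Sym2.eq_swap⟩

lemma Adj.mono (hFF' : F ⊆ F') (h : G.Adj F a b) : G.Adj F' a b :=
  let ⟨e, heF, he⟩ := h
  ⟨e, hFF' heF, he⟩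

instance (F : Set G.E) : Std.Symm (G.Adj F) := ⟨fun _ _ => Adj.symm⟩

lemma reach_iff_reflTransGen : G.Reach F a b ↔ Relation.ReflTransGen (G.Adj F) a b := by
  rw [Reach, Relation.EqvGen.eqvGen_eq_reflTransGen]

lemma Adj.reach (h : G.Adj F a b) : G.Reach F a b := Relation.EqvGen.rel a b h

lemma Reach.refl (F : Set G.E) (a : G.V) : G.Reach F a a := Relation.EqvGen.refl a

lemma Reach.symm (h : G.Reach F a b) : G.Reach F b a := Relation.EqvGen.symm a b h

lemma Reach.trans (h : G.Reach F a b) (h' : G.Reach F b c) : G.Reach F a c :=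
  Relation.EqvGen.trans a b c h h'

lemma Reach.mono (hFF' : F ⊆ F') (h : G.Reach F a b) : G.Reach F' a b :=
  Relation.EqvGen.mono (fun _ _ => Adj.mono hFF') _ _ h

lemma Reach.transport {P : G.V → Prop} (hP : ∀ x y, G.Adj F x y → P x → P y)
    (h : G.Reach F a b) (ha : P a) : P b := by
  rw [reach_iff_reflTransGen] at h
  induction h with
  | refl => exact ha
  | tail _ hxy ih => exact hP _ _ hxy ih

lemma reach_of_walk_in : ∀ {a b : G.V} (w : G.Walk a b), w.In F → G.Reach F a b
  | _, _, .nil a, _ => Reach.refl F a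
  | _, _, .cons e he w, hw => by
      rw [Walk.in_cons_iff] at hw
      exact Adj.reach ⟨e, hw.1, he⟩ |>.trans (reach_of_walk_in w hw.2)

lemma exists_walk_of_reach (h : G.Reach F a b) :
    ∃ w : G.Walk a b, w.In F ∧ w.vertices.Nodup := by
  rw [reach_iff_reflTransGen] at h
  induction h using Relation.ReflTransGen.head_induction_on with
  | refl => exact ⟨.nil b, by simp [Walk.In, Walk.edges], by simp [Walk.vertices]⟩
  | @head x _ hac _ ih =>
      obtain ⟨e, heF, he⟩ := hac
      obtain ⟨w, hwF, hw⟩ := ih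
      by_cases hx : x ∈ w.vertices
      · obtain ⟨w', hedges, hverts⟩ := w.exists_suffix_of_mem_vertices hx
        exact ⟨w', fun f hf => hwF f (hedges.subset hf), hw.sublist hverts.sublist⟩
      · exact ⟨.cons e he w, Walk.in_cons_iff.2 ⟨heF, hwF⟩, List.nodup_cons.2 ⟨hx, hw⟩⟩

lemma Walk.reach_sdiff_of_mem_steps {w : G.Walk a b} (hw : w.edges.Nodup) (hwF : w.In F)
    (h : (p, e, q) ∈ w.steps) : G.Reach (F \ {e}) a p ∧ G.Reach (F \ {e}) q b := by
  obtain ⟨w₁, w₂, hsplit⟩ := Walk.exists_split_of_mem_steps h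
  rw [hsplit, List.nodup_append, List.nodup_cons] at hw
  have hwF' : ∀ f ∈ w₁.edges ++ e :: w₂.edges, f ∈ F := hsplit ▸ hwF
  refine ⟨reach_of_walk_in w₁ fun f hf => ⟨hwF' f (by simp [hf]), ?_⟩,
    reach_of_walk_in w₂ fun f hf => ⟨hwF' f (by simp [hf]), ?_⟩⟩
  · rintro rfl
    exact hw.2.2 f hf f List.mem_cons_self rfl
  · rintro rfl
    exact hw.2.1.1 hf

namespace CycleFree

lemma not_reach_sdiff (hT : G.CycleFree T) (heT : e ∈ T) (he : G.ends e = s(i, j)) :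
    ¬ G.Reach (T \ {e}) i j := by
  intro hij
  obtain ⟨w, hwT, hw⟩ := exists_walk_of_reach hij.symm
  obtain ⟨t, ht⟩ := w.exists_vertices_eq_concat
  have hcycle : (Walk.cons e he w).IsPath := by
    refine ⟨?_, by simpa [Walk.vertices] using hw, ?_⟩
    · rw [Walk.vertices_cons, ht, List.dropLast_cons_of_ne_nil (by simp), List.dropLast_concat]
      rw [ht, List.nodup_append_comm] at hw
      exact hw
    · exact List.nodup_cons.2
        ⟨fun he' => (hwT e he').2 rfl, Walk.edges_nodup_of_vertices_nodup w hw⟩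
  simpa using hT i _ (Walk.in_cons_iff.2 ⟨heT, fun f hf => (hwT f hf).1⟩) hcycle

lemma subset (hF' : G.CycleFree F') (h : F ⊆ F') : G.CycleFree F :=
  fun x w hw hpath => hF' x w (fun f hf => h (hw f hf)) hpath

end CycleFree

lemma cycleFree_insert (hF : G.CycleFree F) (he : G.ends e = s(i, j)) (hij : ¬ G.Reach F i j) :
    G.CycleFree (insert e F) := by
  intro x w hw hpath
  by_cases hew : e ∈ w.edges
  · obtain ⟨p, q, hpq⟩ := Walk.mem_edges_iff_exists_mem_steps.1 hew
    have hsub : insert e F \ {e} ⊆ F := fun f hf => (Set.mem_insert_iff.1 hf.1).resolve_left hf.2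
    obtain ⟨hxp, hqx⟩ := (Walk.reach_sdiff_of_mem_steps hpath.2.2 hw hpq).imp
      (Reach.mono hsub) (Reach.mono hsub)
    rcases Sym2.eq_iff.1 (he.symm.trans (Walk.ends_of_mem_steps hpq)) with
      ⟨rfl, rfl⟩ | ⟨rfl, rfl⟩
    exacts [(hij (hqx.trans hxp).symm).elim, (hij (hqx.trans hxp)).elim]
  · exact hF x w (fun f hf => (Set.mem_insert_iff.1 (hw f hf)).resolve_left
      (fun hfe => hew (hfe ▸ hf))) hpath

lemma exists_isSpanningTree (hG : G.Connected) : ∃ T : Finset G.E, G.IsSpanningTree ↑T := by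
  have hne : {T : Finset G.E | G.CycleFree ↑T}.toFinset.Nonempty :=
    ⟨∅, Set.mem_toFinset.2 fun _ w hw _ => List.eq_nil_iff_forall_not_mem.2 fun f hf => by
      simpa using hw f hf⟩
  obtain ⟨T, hT, hmax⟩ := Finset.exists_max_image _ Finset.card hne
  rw [Set.mem_toFinset] at hT
  have hends : ∀ x y, G.Adj Set.univ x y → G.Reach ↑T x y := by
    rintro x y ⟨e, -, he⟩
    by_contra hxy
    have heT : e ∉ T := fun h => hxy (Adj.reach ⟨e, h, he⟩)
    have := hmax (insert e T) (by simpa using cycleFree_insert hT he hxy)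
    rw [Finset.card_insert_of_notMem heT] at this
    omega
  exact ⟨T, fun x y => (hG x y).transport (fun y z hyz hy => hy.trans (hends y z hyz))
    (Reach.refl _ x), hT⟩

lemma reach_sdiff_or_reach_sdiff (hT : G.ConnOn T) (he : G.ends e = s(i, j)) (x : G.V) :
    G.Reach (T \ {e}) x i ∨ G.Reach (T \ {e}) x j := by
  refine (hT i x).transport (P := fun y => G.Reach (T \ {e}) y i ∨ G.Reach (T \ {e}) y j)
    (fun y z hyz hy => ?_) (.inl (Reach.refl _ i))
  obtain ⟨f, hfT, hf⟩ := hyz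
  by_cases hfe : f = e
  · subst hfe
    rcases Sym2.eq_iff.1 (he.symm.trans hf) with ⟨-, rfl⟩ | ⟨rfl, -⟩
    exacts [.inr (Reach.refl _ _), .inl (Reach.refl _ _)]
  · have hzy : G.Reach (T \ {e}) z y := (Adj.reach (F := T \ {e}) ⟨f, ⟨hfT, hfe⟩, hf⟩).symm
    exact hy.imp hzy.trans hzy.trans

namespace CycleFree

lemma mem_steps_iff (hT : G.CycleFree T) {w : G.Walk k l} (hw : w.IsPath) (hwT : w.In T)
    (heT : e ∈ T) (he : G.ends e = s(i, j)) :
    (i, e, j) ∈ w.steps ↔ G.Reach (T \ {e}) k i ∧ G.Reach (T \ {e}) j l := by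
  refine ⟨Walk.reach_sdiff_of_mem_steps hw.2.2 hwT, fun ⟨hki, hjl⟩ => ?_⟩
  have hij := hT.not_reach_sdiff heT he
  have hew : e ∈ w.edges := by
    by_contra hew
    have hkl := reach_of_walk_in (F := T \ {e}) w fun f hf => ⟨hwT f hf, fun h => hew (h ▸ hf)⟩
    exact hij ((hki.symm.trans hkl).trans hjl.symm)
  obtain ⟨p, q, hpq⟩ := Walk.mem_edges_iff_exists_mem_steps.1 hew
  rcases Sym2.eq_iff.1 (he.symm.trans (Walk.ends_of_mem_steps hpq)) with ⟨rfl, rfl⟩ | ⟨rfl, rfl⟩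
  · exact hpq
  · exact (hij (hki.symm.trans (Walk.reach_sdiff_of_mem_steps hw.2.2 hwT hpq).1)).elim

lemma exists_path_iff (hT : G.CycleFree T) (heT : e ∈ T) (he : G.ends e = s(i, j)) :
    (∃ w : G.Walk k l, w.IsPath ∧ w.In T ∧ (i, e, j) ∈ w.steps) ↔
      G.Reach (T \ {e}) k i ∧ G.Reach (T \ {e}) j l := by
  refine ⟨fun ⟨w, hw, hwT, h⟩ => (hT.mem_steps_iff hw hwT heT he).1 h, fun h => ?_⟩
  have hkl : G.Reach T k l := (h.1.mono Set.sdiff_subset).trans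
    ((Adj.reach ⟨e, heT, he⟩).trans (h.2.mono Set.sdiff_subset))
  obtain ⟨w, hwT, hw⟩ := exists_walk_of_reach hkl
  have hw := Walk.isPath_of_vertices_nodup hw
  exact ⟨w, hw, hwT, (hT.mem_steps_iff hw hwT heT he).2 h⟩

lemma treeCurrent_eq (hT : G.CycleFree T) (heT : e ∈ T) (he : G.ends e = s(i, j)) :
    G.treeCurrent T k l e i j =
      if G.Reach (T \ {e}) k i ∧ G.Reach (T \ {e}) j l then 1
      else if G.Reach (T \ {e}) k j ∧ G.Reach (T \ {e}) i l then -1 else 0 := by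
  rw [treeCurrent, hT.exists_path_iff heT he, hT.exists_path_iff heT (he.trans Sym2.eq_swap)]
  simp only [heT, true_and]

end CycleFree

lemma treeCurrent_of_notMem (heT : e ∉ T) : G.treeCurrent T k l e i j = 0 := by
  simp [treeCurrent, heT]

lemma CycleFree.treeCurrent_eq_of_isPath (hT : G.CycleFree T) {w : G.Walk k l} (hw : w.IsPath)
    (hwT : w.In T) (he : G.ends e = s(x, y)) :
    G.treeCurrent T k l e x y =
      (if (x, e, y) ∈ w.steps then 1 else 0) - (if (y, e, x) ∈ w.steps then 1 else 0) := by
  by_cases heT : e ∈ T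
  · have hxy := hT.not_reach_sdiff heT he
    simp only [hT.treeCurrent_eq heT he, hT.mem_steps_iff hw hwT heT he,
      hT.mem_steps_iff hw hwT heT (he.trans Sym2.eq_swap)]
    split_ifs with h₁ h₂ h₂ <;> first | exact (hxy (h₁.1.symm.trans h₂.1)).elim | norm_num
  · have hnot : ∀ p q, (p, e, q) ∉ w.steps := fun p q h =>
      heT (hwT e (Walk.mem_edges_of_mem_steps h))
    simp [treeCurrent_of_notMem heT, hnot]

lemma Walk.sum_sum_steps_sub (x : G.V) : ∀ {k l : G.V} (w : G.Walk k l), w.steps.Nodup →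
    ∑ y : G.V, ∑ e : G.E,
      ((if (x, e, y) ∈ w.steps then (1 : ℝ) else 0) - (if (y, e, x) ∈ w.steps then 1 else 0)) =
      (if x = k then 1 else 0) - (if x = l then 1 else 0)
  | _, _, .nil _, _ => by simp [steps]
  | _, _, @Walk.cons _ a b c e he w, hnd => by
      have hnd' := hnd
      rw [steps_cons, List.nodup_cons] at hnd'
      have hins : ∀ s : G.V × G.E × G.V,
          (if s ∈ (Walk.cons e he w).steps then (1 : ℝ) else 0) =
            (if s = (a, e, b) then 1 else 0) + (if s ∈ w.steps then 1 else 0) := by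
        intro s
        by_cases hs : s = (a, e, b)
        · simp [hs, hnd'.1]
        · simp [hs]
      simp only [hins, add_sub_add_comm, Finset.sum_add_distrib, sum_sum_steps_sub x w hnd'.2]
      simp [Finset.sum_sub_distrib, Finset.sum_ite_eq', ite_and]

lemma IsSpanningTree.sum_treeCurrent (hT : G.IsSpanningTree T) (k l x : G.V) :
    ∑ y : G.V, ∑ e : G.E, (if G.ends e = s(x, y) then G.treeCurrent T k l e x y else 0) =
      (if x = k then 1 else 0) - (if x = l then 1 else 0) := by
  obtain ⟨w, hwT, hw⟩ := exists_walk_of_reach (hT.1 k l)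
  have hw := Walk.isPath_of_vertices_nodup hw
  rw [← w.sum_sum_steps_sub x (Walk.steps_nodup hw.2.2)]
  refine Finset.sum_congr rfl fun y _ => Finset.sum_congr rfl fun e _ => ?_
  by_cases he : G.ends e = s(x, y)
  · rw [if_pos he, hT.2.treeCurrent_eq_of_isPath hw hwT he]
  · have hxy : (x, e, y) ∉ w.steps := fun h => he (Walk.ends_of_mem_steps h)
    have hyx : (y, e, x) ∉ w.steps := fun h => he ((Walk.ends_of_mem_steps h).trans Sym2.eq_swap)
    simp [he, hxy, hyx]

variable (G) in
/-- The 2-forests `F` of the paper with `k` and `ℓ` in different components, which are then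
the components of `k` and of `ℓ`. -/
def IsSeparatingForest (F : Set G.E) (k l : G.V) : Prop :=
  G.CycleFree F ∧ (∀ x, G.Reach F x k ∨ G.Reach F x l) ∧ ¬ G.Reach F k l

lemma IsSeparatingForest.isSpanningTree_insert (hF : G.IsSeparatingForest F k l)
    (he : G.ends e = s(i, j)) (hij : ¬ G.Reach F i j) :
    G.IsSpanningTree (insert e F) ∧
      G.treeCurrent (insert e F) k l e i j =
        (if G.Reach F i k then 1 else 0) - (if G.Reach F j k then 1 else 0) := by
  obtain ⟨hcf, hcover, hkl⟩ := hF
  have hcf' := cycleFree_insert hcf he hij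
  have hsub : F ⊆ insert e F := Set.subset_insert e F
  have hsides : (G.Reach F i k ∧ G.Reach F j l) ∨ (G.Reach F i l ∧ G.Reach F j k) := by
    rcases hcover i with hi | hi <;> rcases hcover j with hj | hj
    exacts [(hij (hi.trans hj.symm)).elim, .inl ⟨hi, hj⟩, .inr ⟨hi, hj⟩,
      (hij (hi.trans hj.symm)).elim]
  have hkl' : G.Reach (insert e F) k l := by
    have hij' : G.Reach (insert e F) i j := Adj.reach ⟨e, Set.mem_insert e F, he⟩
    rcases hsides with ⟨hi, hj⟩ | ⟨hi, hj⟩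
    · exact ((hi.symm.mono hsub).trans hij').trans (hj.mono hsub)
    · exact ((hj.symm.mono hsub).trans hij'.symm).trans (hi.mono hsub)
  have hreach_k : ∀ x, G.Reach (insert e F) x k := fun x =>
    (hcover x).elim (·.mono hsub) fun h => (h.mono hsub).trans hkl'.symm
  refine ⟨⟨fun a b => (hreach_k a).trans (hreach_k b).symm, hcf'⟩, ?_⟩
  rw [hcf'.treeCurrent_eq (Set.mem_insert e F) he,
    Set.insert_sdiff_self_of_notMem fun h => hij (Adj.reach ⟨e, h, he⟩)]
  rcases hsides with ⟨hi, hj⟩ | ⟨hi, hj⟩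
  · have hjk : ¬ G.Reach F j k := fun h => hkl (h.symm.trans hj)
    simp [hi, hi.symm, hj, hjk]
  · have hik : ¬ G.Reach F i k := fun h => hkl (h.symm.trans hi)
    have hki : ¬ G.Reach F k i := fun h => hik h.symm
    simp [hi, hj, hj.symm, hik, hki]

lemma IsSpanningTree.isSeparatingForest_sdiff (hT : G.IsSpanningTree T) (heT : e ∈ T)
    (he : G.ends e = s(i, j)) (hI : G.treeCurrent T k l e i j ≠ 0) :
    G.IsSeparatingForest (T \ {e}) k l ∧ ¬ G.Reach (T \ {e}) i j := by
  have hij := hT.2.not_reach_sdiff heT he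
  rw [hT.2.treeCurrent_eq heT he] at hI
  have hsides : (G.Reach (T \ {e}) k i ∧ G.Reach (T \ {e}) j l) ∨
      (G.Reach (T \ {e}) k j ∧ G.Reach (T \ {e}) i l) := by
    split_ifs at hI with h₁ h₂
    exacts [.inl h₁, .inr h₂, (hI rfl).elim]
  refine ⟨⟨hT.2.subset Set.sdiff_subset, fun x => ?_, fun hkl => hij ?_⟩, hij⟩
  · rcases reach_sdiff_or_reach_sdiff hT.1 he x with hx | hx <;>
      rcases hsides with ⟨hk, hl⟩ | ⟨hk, hl⟩
    exacts [.inl (hx.trans hk.symm), .inr (hx.trans hl), .inr (hx.trans hl),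
      .inl (hx.trans hk.symm)]
  · rcases hsides with ⟨hki, hjl⟩ | ⟨hkj, hil⟩
    exacts [(hki.symm.trans hkl).trans hjl.symm, (hil.trans hkl.symm).trans hkj]

variable (G) in
noncomputable def spanningTrees : Finset (Finset G.E) :=
  Finset.univ.filter fun T => G.IsSpanningTree ↑T

lemma mem_spanningTrees {T : Finset G.E} : T ∈ G.spanningTrees ↔ G.IsSpanningTree ↑T := by
  simp [spanningTrees]

variable (G) in
/-- Divided by `Σ_T μ(Ed(Γ) ∖ T)`, this is the voltage `v` of the theorem (up to a constant). -/
noncomputable def forestPotential (μ : G.E → ℝ) (k l x : G.V) : ℝ :=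
  ∑ F ∈ Finset.univ.filter (fun F : Finset G.E => G.IsSeparatingForest ↑F k l),
    (∏ f ∈ Finset.univ \ F, μ f) * if G.Reach ↑F x k then 1 else 0

lemma IsSeparatingForest.mul_sub_eq_treeCurrent_insert (μ : G.E → ℝ) {F : Finset G.E}
    (hF : G.IsSeparatingForest ↑F k l) (he : G.ends e = s(i, j)) (hij : ¬ G.Reach ↑F i j) :
    (∏ f ∈ Finset.univ \ F, μ f) *
        ((if G.Reach ↑F i k then 1 else 0) - (if G.Reach ↑F j k then 1 else 0)) =
      μ e * ((∏ f ∈ Finset.univ \ insert e F, μ f) * G.treeCurrent ↑(insert e F) k l e i j) := by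
  have heF : e ∉ F := fun h => hij (Adj.reach ⟨e, h, he⟩)
  rw [Finset.prod_sdiff_eq_mul_prod_sdiff_insert μ (Finset.mem_univ e) heF, Finset.coe_insert,
    (hF.isSpanningTree_insert he hij).2]
  ring

/-- Adding `e` is a bijection from the separating 2-forests on which `i` and `j` lie on
different sides onto the spanning trees whose `k`-`ℓ` path uses `e`. -/
lemma forestPotential_sub (μ : G.E → ℝ) (he : G.ends e = s(i, j)) :
    G.forestPotential μ k l i - G.forestPotential μ k l j =
      μ e * ∑ T ∈ G.spanningTrees, (∏ f ∈ Finset.univ \ T, μ f) * G.treeCurrent ↑T k l e i j := by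
  have hij : ∀ F : Finset G.E,
      (∏ f ∈ Finset.univ \ F, μ f) *
        ((if G.Reach ↑F i k then 1 else 0) - (if G.Reach ↑F j k then 1 else 0)) ≠ 0 →
      ¬ G.Reach ↑F i j := fun F hne hij => hne <| by
    simp [(show G.Reach ↑F i k ↔ G.Reach ↑F j k from ⟨hij.symm.trans, hij.trans⟩)]
  have heF {F : Finset G.E} (hij : ¬ G.Reach ↑F i j) : e ∉ F := fun h =>
    hij (Adj.reach ⟨e, h, he⟩)
  simp only [forestPotential, ← Finset.sum_sub_distrib, ← mul_sub, Finset.mul_sum]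
  refine Finset.sum_bij_ne_zero (fun F _ _ => insert e F) ?_ ?_ ?_ ?_
  · intro F hF hne
    rw [mem_spanningTrees, Finset.coe_insert]
    exact ((Finset.mem_filter.1 hF).2.isSpanningTree_insert he (hij F hne)).1
  · intro F₁ _ hne₁ F₂ _ hne₂ h
    rw [← Finset.erase_insert (heF (hij F₁ hne₁)), ← Finset.erase_insert (heF (hij F₂ hne₂)), h]
  · intro T hT hne
    rw [mem_spanningTrees] at hT
    have hI : G.treeCurrent ↑T k l e i j ≠ 0 := fun h => hne (by rw [h]; ring)
    have heT : e ∈ T := by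
      by_contra heT
      exact hI (treeCurrent_of_notMem (by simpa using heT))
    obtain ⟨hF, hij⟩ := Finset.coe_erase e T ▸ hT.isSeparatingForest_sdiff heT he hI
    have hval := hF.mul_sub_eq_treeCurrent_insert μ he hij
    rw [Finset.insert_erase heT] at hval
    exact ⟨T.erase e, Finset.mem_filter.2 ⟨Finset.mem_univ _, hF⟩, hval ▸ hne,
      Finset.insert_erase heT⟩
  · intro F hF hne
    exact (Finset.mem_filter.1 hF).2.mul_sub_eq_treeCurrent_insert μ he (hij F hne)

lemma lap_forestPotential (hμ : ∀ e, μ e ≠ 0) (x : G.V) :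
    G.lap μ (G.forestPotential μ k l) x =
      (∑ T ∈ G.spanningTrees, ∏ f ∈ Finset.univ \ T, μ f) *
        ((if x = k then 1 else 0) - (if x = l then 1 else 0)) := by
  calc G.lap μ (G.forestPotential μ k l) x
      = ∑ y : G.V, ∑ f : G.E, ∑ T ∈ G.spanningTrees, (∏ g ∈ Finset.univ \ T, μ g) *
          (if G.ends f = s(x, y) then G.treeCurrent ↑T k l f x y else 0) := by
        refine Finset.sum_congr rfl fun y _ => Finset.sum_congr rfl fun f _ => ?_
        by_cases hf : G.ends f = s(x, y)
        · simp only [if_pos hf, forestPotential_sub μ hf, mul_div_cancel_left₀ _ (hμ f)]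
        · simp [hf]
    _ = ∑ T ∈ G.spanningTrees, (∏ g ∈ Finset.univ \ T, μ g) * ∑ y : G.V, ∑ f : G.E,
          (if G.ends f = s(x, y) then G.treeCurrent ↑T k l f x y else 0) := by
        simp_rw [Finset.mul_sum, Finset.sum_comm (t := G.spanningTrees)]
    _ = _ := by
        rw [Finset.sum_mul]
        refine Finset.sum_congr rfl fun T hT => ?_
        rw [(mem_spanningTrees.1 hT).sum_treeCurrent]

lemma lap_sub (μ : G.E → ℝ) (u w : G.V → ℝ) : G.lap μ (u - w) = G.lap μ u - G.lap μ w := by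
  funext x
  simp only [lap, Pi.sub_apply, ← Finset.sum_sub_distrib]
  refine Finset.sum_congr rfl fun y _ => Finset.sum_congr rfl fun f _ => ?_
  split_ifs <;> ring

lemma lap_smul (μ : G.E → ℝ) (c : ℝ) (u : G.V → ℝ) : G.lap μ (c • u) = c • G.lap μ u := by
  funext x
  simp only [lap, Pi.smul_apply, smul_eq_mul, Finset.mul_sum]
  refine Finset.sum_congr rfl fun y _ => Finset.sum_congr rfl fun f _ => ?_
  split_ifs <;> ring

lemma eq_of_adj_of_isMax (hμ : ∀ e, 0 < μ e) {d : G.V → ℝ} {p q : G.V}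
    (hmax : ∀ y, d y ≤ d p) (h : G.lap μ d p = 0) (hpq : G.Adj Set.univ p q) : d q = d p := by
  obtain ⟨f, -, hf⟩ := hpq
  have hterm : ∀ y g, 0 ≤ if G.ends g = s(p, y) then (d p - d y) / μ g else 0 := fun y g => by
    split_ifs
    exacts [div_nonneg (sub_nonneg.2 (hmax y)) (hμ g).le, le_rfl]
  have hq := (Finset.sum_eq_zero_iff_of_nonneg fun y _ => Finset.sum_nonneg fun g _ =>
    hterm y g).1 h q (Finset.mem_univ q)
  have hfq := (Finset.sum_eq_zero_iff_of_nonneg fun g _ => hterm q g).1 hq f (Finset.mem_univ f)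
  rw [if_pos hf, div_eq_zero_iff, sub_eq_zero] at hfq
  exact (hfq.resolve_right (hμ f).ne').symm

lemma eq_of_lap_eq_zero (hG : G.Connected) (hμ : ∀ e, 0 < μ e) {d : G.V → ℝ}
    (h : G.lap μ d = 0) (a b : G.V) : d a = d b := by
  obtain ⟨p, -, hp⟩ := Finset.exists_max_image Finset.univ d ⟨a, Finset.mem_univ a⟩
  have hconst : ∀ x, d x = d p := fun x =>
    (hG p x).transport (P := fun y => d y = d p) (fun y z hyz hy =>
      (eq_of_adj_of_isMax hμ (fun w => hy ▸ hp w (Finset.mem_univ w)) (congrFun h y) hyz).trans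
        hy) rfl
  rw [hconst a, hconst b]

lemma sub_eq_sub_of_lap_eq (hG : G.Connected) (hμ : ∀ e, 0 < μ e) {u w : G.V → ℝ}
    (h : G.lap μ u = G.lap μ w) (a b : G.V) : u a - u b = w a - w b := by
  have := eq_of_lap_eq_zero hG hμ (d := u - w) (by rw [lap_sub, h, sub_self]) a b
  simp only [Pi.sub_apply] at this
  linarith

lemma abs_treeCurrent_le_one (T : Set G.E) (e : G.E) (i j : G.V) :
    |G.treeCurrent T k l e i j| ≤ 1 := by
  unfold treeCurrent
  split_ifs <;> norm_num

lemma abs_sum_mul_treeCurrent_le (hμ : ∀ e, 0 ≤ μ e) (s : Finset (Finset G.E)) (e : G.E)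
    (i j : G.V) :
    |∑ T ∈ s, (∏ f ∈ Finset.univ \ T, μ f) * G.treeCurrent ↑T k l e i j| ≤
      ∑ T ∈ s, ∏ f ∈ Finset.univ \ T, μ f := by
  refine (Finset.abs_sum_le_sum_abs _ _).trans (Finset.sum_le_sum fun T _ => ?_)
  have hw : 0 ≤ ∏ f ∈ Finset.univ \ T, μ f := Finset.prod_nonneg fun f _ => hμ f
  rw [abs_mul, abs_of_nonneg hw]
  exact mul_le_of_le_one_right hw (abs_treeCurrent_le_one _ e i j)

end ResGraph

theorem stmt2 (G : ResGraph) (hG : G.Connected) (μ : G.E → ℝ) (hμ : ∀ e : G.E, 0 < μ e)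
    (k l : G.V) (v : G.V → ℝ)
    (hv : G.lap μ v = fun x => (if x = k then (1 : ℝ) else 0) - (if x = l then 1 else 0))
    (e : G.E) (i j : G.V) (he : G.ends e = s(i, j)) :
    (v i - v j) / μ e =
      (∑ T ∈ Finset.univ.filter (fun T : Finset G.E => G.IsSpanningTree ↑T),
          (∏ f ∈ Finset.univ \ T, μ f) * G.treeCurrent ↑T k l e i j) /
      (∑ T ∈ Finset.univ.filter (fun T : Finset G.E => G.IsSpanningTree ↑T),
          ∏ f ∈ Finset.univ \ T, μ f) ∧
    -1 ≤ (v i - v j) / μ e ∧ (v i - v j) / μ e ≤ 1 := by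
  rw [show Finset.univ.filter (fun T : Finset G.E => G.IsSpanningTree ↑T) = G.spanningTrees
    from rfl]
  set W := ∑ T ∈ G.spanningTrees, ∏ f ∈ Finset.univ \ T, μ f
  have hW : 0 < W := by
    obtain ⟨T, hT⟩ := G.exists_isSpanningTree hG
    exact Finset.sum_pos (fun T _ => Finset.prod_pos fun f _ => hμ f)
      ⟨T, ResGraph.mem_spanningTrees.2 hT⟩
  have hlap : G.lap μ (W⁻¹ • G.forestPotential μ k l) = G.lap μ v := by
    funext x
    rw [ResGraph.lap_smul, hv, Pi.smul_apply, ResGraph.lap_forestPotential (fun f => (hμ f).ne'),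
      smul_eq_mul, inv_mul_cancel_left₀ hW.ne']
  have hcurrent : (v i - v j) / μ e =
      (∑ T ∈ G.spanningTrees, (∏ f ∈ Finset.univ \ T, μ f) * G.treeCurrent ↑T k l e i j) / W := by
    rw [← ResGraph.sub_eq_sub_of_lap_eq hG hμ hlap i j]
    simp only [Pi.smul_apply, smul_eq_mul, ← mul_sub, ResGraph.forestPotential_sub μ he]
    field_simp [(hμ e).ne']
  refine ⟨hcurrent, ?_⟩
  rw [hcurrent, ← abs_le, abs_div, abs_of_pos hW, div_le_one hW]
  exact ResGraph.abs_sum_mul_treeCurrent_le (fun f => (hμ f).le) _ e i j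
end

section
/- (Jeans' Least Power Theorem) Let (Γ, μ) be a proper resistive network, let D ∈ ℝ^{Vert(Γ)}, and let I be an edge current assignment consistent with D. Then the following are equivalent: (i) there is a voltage assignment v ∈ ℝ^{Vert(Γ)} such that I(e : i → j) = (v_i − v_j)/μ(e) for every oriented edge e : i → j; (ii) I minimizes the power dissipated Σ_{e ∈ Ed(Γ)} μ(e) I(e)² among all edge current assignments consistent with D. -/
open Classical
open scoped BigOperators

/-- A graph: a finite set of vertices, a finite set of edges, and a map assigning to
each edge its unordered pair of endpoints (loops and parallel edges allowed). -/
structure RGraph where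
  V : Type
  E : Type
  [fintV : Fintype V]
  [decV : DecidableEq V]
  [fintE : Fintype E]
  [decE : DecidableEq E]
  ends : E → Sym2 V

attribute [instance] RGraph.fintV RGraph.decV RGraph.fintE RGraph.decE

namespace RGraph

variable (G : RGraph)

/-- The Laplacian of the resistive network `(G, μ)` applied to a voltage assignment `v`:
`(L v) i = Σ_j Σ_{edges e : i → j} (v i − v j) / μ e`. -/
noncomputable def lap (μ : G.E → ℝ) (v : G.V → ℝ) : G.V → ℝ := fun i =>
  ∑ j : G.V, ∑ e : G.E, if G.ends e = s(i, j) then (v i - v j) / μ e else 0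

/-- `i` and `j` are joined by an edge belonging to `F`. -/
def Adj (F : Set G.E) (i j : G.V) : Prop := ∃ e ∈ F, G.ends e = s(i, j)

/-- `i` and `j` lie in the same connected component of the subgraph `Γ|_F`
(the subgraph with all vertices of `Γ` and edge set `F`). -/
def Reach (F : Set G.E) (i j : G.V) : Prop := Relation.EqvGen (G.Adj F) i j

/-- The subgraph `Γ|_F` is connected. -/
def ConnOn (F : Set G.E) : Prop := ∀ i j : G.V, G.Reach F i j

/-- The graph `G` is connected. -/
def Connected : Prop := G.ConnOn Set.univ

/-- The set of connected components of the subgraph `Γ|_F`. -/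
def Comp (F : Set G.E) : Type := Quotient (Relation.EqvGen.setoid (G.Adj F))

/-- A walk from `i` to `j`: a finite sequence of vertices together with a choice of an
edge from each vertex to the next. -/
inductive Walk : G.V → G.V → Type
  | nil (i : G.V) : Walk i i
  | cons {i j k : G.V} (e : G.E) (he : G.ends e = s(i, j)) (w : Walk j k) : Walk i k

namespace Walk

variable {G}

/-- The list of vertices visited by a walk, in order (starting vertex first). -/
def vertices : ∀ {i j : G.V}, G.Walk i j → List G.V
  | _, _, .nil a => [a]
  | _, _, @Walk.cons _ a _ _ _ _ w => a :: vertices w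

/-- The list of edges traversed by a walk, in order. -/
def edges : ∀ {i j : G.V}, G.Walk i j → List G.E
  | _, _, .nil _ => []
  | _, _, .cons e _ w => e :: edges w

/-- The list of steps `(source, edge, target)` of a walk. -/
def steps : ∀ {i j : G.V}, G.Walk i j → List (G.V × G.E × G.V)
  | _, _, .nil _ => []
  | _, _, @Walk.cons _ a b _ e _ w => (a, e, b) :: steps w

/-- All edges of the walk lie in the edge set `F`. -/
def In {i j : G.V} (w : G.Walk i j) (F : Set G.E) : Prop := ∀ e ∈ w.edges, e ∈ F

/-- A path: a walk all of whose vertices are distinct, except possibly the start and the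
end vertex (and which does not traverse any edge twice). -/
def IsPath {i j : G.V} (w : G.Walk i j) : Prop :=
  w.vertices.dropLast.Nodup ∧ w.vertices.tail.Nodup ∧ w.edges.Nodup

/-- Change the (definitionally equal) endpoints of a walk. -/
def copy : ∀ {i j i' j' : G.V}, G.Walk i j → i = i' → j = j' → G.Walk i' j'
  | _, _, _, _, w, rfl, rfl => w

variable (G)

end Walk

/-- `F` is cycle-free: the subgraph `Γ|_F` contains no cycle, i.e. every closed path
with edges in `F` is trivial. -/
def CycleFree (F : Set G.E) : Prop :=
  ∀ (i : G.V) (w : G.Walk i i), w.In F → w.IsPath → w.edges = []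

/-- `T` is a spanning tree of `G`: the subgraph `Γ|_T` is connected and cycle-free. -/
def IsSpanningTree (T : Set G.E) : Prop := G.ConnOn T ∧ G.CycleFree T

/-- `F` is a 2-forest: `Γ|_F` is cycle-free with exactly two connected components. -/
def IsTwoForest (F : Set G.E) : Prop := G.CycleFree F ∧ Nat.card (G.Comp F) = 2

/-- `M` is a maximal forest of the subgraph `Γ|_S`: it is a cycle-free subset of `S`
containing a spanning tree of each connected component of `Γ|_S` (equivalently,
inducing the same connected components as `S`). -/
def IsMaxForestOf (M S : Set G.E) : Prop :=
  M ⊆ S ∧ G.CycleFree M ∧ ∀ i j : G.V, G.Reach S i j ↔ G.Reach M i j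

/-- The sign `σ(i,j;k,ℓ;F)` attached to a 2-forest `F`: `+1` if one component of `Γ|_F`
contains `i` and `k` and the other contains `j` and `ℓ`; `-1` if one component contains
`i` and `ℓ` and the other contains `j` and `k`; `0` otherwise. -/
noncomputable def sigma2 (F : Set G.E) (i j k l : G.V) : ℝ :=
  if ¬ G.Reach F i j ∧ G.Reach F i k ∧ G.Reach F j l then 1
  else if ¬ G.Reach F i j ∧ G.Reach F i l ∧ G.Reach F j k then -1
  else 0

end RGraph

namespace RGraph

variable (G : RGraph)

/-- An oriented edge: an edge together with an ordering of its endpoints. -/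
def OEdge : Type := {x : G.E × G.V × G.V // G.ends x.1 = s(x.2.1, x.2.2)}

noncomputable instance : Fintype G.OEdge := Subtype.fintype _

namespace OEdge

variable {G}

/-- The underlying edge of an oriented edge. -/
def edge (o : G.OEdge) : G.E := o.1.1

/-- The source of an oriented edge. -/
def src (o : G.OEdge) : G.V := o.1.2.1

/-- The target of an oriented edge. -/
def tgt (o : G.OEdge) : G.V := o.1.2.2

/-- The reversal of an oriented edge. -/
def rev (o : G.OEdge) : G.OEdge := ⟨(o.1.1, o.1.2.2, o.1.2.1), o.2.trans Sym2.eq_swap⟩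

end OEdge

/-- An edge current assignment: a real-valued function on oriented edges with
`I(e : i → j) = −I(e : j → i)`. -/
def IsCurrent (I : G.OEdge → ℝ) : Prop := ∀ o : G.OEdge, I o.rev = - I o

/-- The edge current assignment `I` is consistent with the vertex current assignment `D`:
for every vertex `i`, `Σ_j Σ_{edges e : i → j} I(e : i → j) = D i`. -/
def Consistent (I : G.OEdge → ℝ) (D : G.V → ℝ) : Prop :=
  ∀ x : G.V, (∑ o ∈ Finset.univ.filter (fun o : G.OEdge => o.src = x), I o) = D x

lemma exists_oedge (e : G.E) : ∃ o : G.OEdge, o.edge = e := by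
  have h : ∀ z : Sym2 G.V, G.ends e = z → ∃ o : G.OEdge, o.edge = e := by
    refine Sym2.ind (fun a b h => ?_)
    exact ⟨⟨(e, a, b), h⟩, rfl⟩
  exact h (G.ends e) rfl

/-- A choice of orientation for each edge. -/
noncomputable def orient (e : G.E) : G.OEdge := Classical.choose (G.exists_oedge e)

lemma orient_edge (e : G.E) : (G.orient e).edge = e := Classical.choose_spec (G.exists_oedge e)

/-- The power dissipated by an edge current assignment: `Σ_{e ∈ Ed(Γ)} μ(e) I(e)²`. -/
noncomputable def power (μ : G.E → ℝ) (I : G.OEdge → ℝ) : ℝ :=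
  ∑ e : G.E, μ e * (I (G.orient e)) ^ 2

/-- The Green's function `g(Γ, μ; D, E) = Dᵀ v` for any `v` with `L v = E`
(for `Γ` connected, `μ` proper, and `D`, `E` zero-sum vectors, such a `v` exists and
`Dᵀ v` does not depend on the choice). -/
noncomputable def green (μ : G.E → ℝ) (D E : G.V → ℝ) : ℝ :=
  if h : ∃ v : G.V → ℝ, G.lap μ v = E then ∑ x : G.V, D x * Classical.choose h x else 0

/-- The contracted graph `Γ/S`: identify the two endpoints of each edge in `S` and
delete the edges in `S`. -/
noncomputable def contract (S : Set G.E) : RGraph :=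
  letI : DecidableEq (Quotient (Relation.EqvGen.setoid (G.Adj S))) := Classical.decEq _
  letI : DecidablePred (· ∈ S) := Classical.decPred _
  { V := Quotient (Relation.EqvGen.setoid (G.Adj S))
    E := {e : G.E // e ∉ S}
    ends := fun e => (G.ends e.1).map (Quotient.mk (Relation.EqvGen.setoid (G.Adj S))) }

/-- The quotient map `[·] : Vert(Γ) → Vert(Γ/S)`. -/
noncomputable def cmk (S : Set G.E) (x : G.V) : (G.contract S).V :=
  Quotient.mk (Relation.EqvGen.setoid (G.Adj S)) x

/-- The edge of `Γ` underlying an edge of `Γ/S` (recall `Ed(Γ/S) = Ed(Γ)∖S`). -/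
noncomputable def cval (S : Set G.E) (e : (G.contract S).E) : G.E := e.1

/-- The subset of `Ed(Γ/S) = Ed(Γ)∖S` induced by a subset `F ⊆ Ed(Γ)`, namely `F∖S`. -/
noncomputable def cset (S : Set G.E) (F : Set G.E) : Set (G.contract S).E :=
  {e : (G.contract S).E | G.cval S e ∈ F}

/-- The linear map `[·] : ℝ^{Vert(Γ)} → ℝ^{Vert(Γ/S)}` sending the basis vector `e_i`
to `e_{[i]}`. -/
noncomputable def pushVec (S : Set G.E) (D : G.V → ℝ) : (G.contract S).V → ℝ := fun x =>
  ∑ i ∈ Finset.univ.filter (fun i : G.V => G.cmk S i = x), D i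

/-- Contraction of walks: delete from a walk in `Γ` the edges belonging to `S`,
obtaining a walk in `Γ/S`. -/
noncomputable def contractWalk (S : Set G.E) :
    ∀ {i j : G.V}, G.Walk i j → (G.contract S).Walk (G.cmk S i) (G.cmk S j)
  | _, _, .nil a => .nil (G.cmk S a)
  | _, _, @Walk.cons _ a b _ e he w =>
    if hS : e ∈ S then
      (contractWalk S w).copy
        (Quotient.sound (Relation.EqvGen.rel b a ⟨e, hS, he.trans Sym2.eq_swap⟩)) rfl
    else
      Walk.cons (j := G.cmk S b) ⟨e, hS⟩
        (by show Sym2.map _ (G.ends e) = s(G.cmk S a, G.cmk S b)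
            rw [he]
            exact Sym2.map_pair_eq _ a b) (contractWalk S w)

/-- The current `I_{Γ|_T}(e : i → j)` flowing along the oriented edge `e : i → j` when a
unit current from `k` to `ℓ` is imposed on the spanning tree `Γ|_T`: it is `+1` if `e ∈ T`
and the unique path in `Γ|_T` from `k` to `ℓ` traverses `e` from `i` to `j`, `−1` if it
traverses `e` from `j` to `i`, and `0` otherwise. -/
noncomputable def treeCurrent (T : Set G.E) (k l : G.V) (e : G.E) (i j : G.V) : ℝ :=
  if e ∈ T ∧ ∃ w : G.Walk k l, w.IsPath ∧ w.In T ∧ (i, e, j) ∈ w.steps then 1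
  else if e ∈ T ∧ ∃ w : G.Walk k l, w.IsPath ∧ w.In T ∧ (j, e, i) ∈ w.steps then -1
  else 0

/-- The extended Green's function on possibly improper resistances: contract the edges of
zero resistance and take the Green's function of the resulting proper network, with the
pushed-forward vertex vectors. -/
noncomputable def egreen (μ : G.E → ℝ) (D E : G.V → ℝ) : ℝ :=
  (G.contract {e : G.E | μ e = 0}).green (fun e => μ (G.cval {e : G.E | μ e = 0} e))
    (G.pushVec {e : G.E | μ e = 0} D) (G.pushVec {e : G.E | μ e = 0} E)

end RGraph

/-!
Write `⟪I, J⟫ = Σ_o μ(o) I(o) J(o)` (`powerForm`) over oriented edges, so the power of a current is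
`⟪I, I⟫ / 2`. The currents consistent with `D` form the affine space `I + Z`, where `Z` is the
space of circulations (currents with zero outflow), and the power is a nonnegative quadratic
form; hence `I` minimizes it on `I + Z` iff `⟪I, J⟫ = 0` for all `J ∈ Z`. Summation by parts
shows that voltage drops `μ I = dv` are orthogonal to `Z`. Conversely, if `⟪I, ·⟫` vanishes on
`Z` it vanishes on the kernel of the (antisymmetrised) outflow map, so it factors through that
map; the resulting functional on vertex vectors is the voltage.
-/

namespace RGraph

variable {G : RGraph}

namespace OEdge

@[simp] lemma rev_rev (o : G.OEdge) : o.rev.rev = o := rfl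

@[simp] lemma rev_edge (o : G.OEdge) : o.rev.edge = o.edge := rfl

@[simp] lemma rev_src (o : G.OEdge) : o.rev.src = o.tgt := rfl

@[simp] lemma rev_tgt (o : G.OEdge) : o.rev.tgt = o.src := rfl

lemma rev_involutive : Function.Involutive (rev : G.OEdge → G.OEdge) := rev_rev

lemma eq_or_eq_rev {o x : G.OEdge} (h : o.edge = x.edge) : o = x ∨ o = x.rev := by
  have hs : s(o.src, o.tgt) = s(x.src, x.tgt) := o.2.symm.trans ((congrArg G.ends h).trans x.2)
  rcases Sym2.eq_iff.mp hs with ⟨h1, h2⟩ | ⟨h1, h2⟩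
  · exact Or.inl (Subtype.ext (Prod.ext h (Prod.ext h1 h2)))
  · exact Or.inr (Subtype.ext (Prod.ext h (Prod.ext h1 h2)))

end OEdge

lemma sum_comp_rev {M : Type*} [AddCommMonoid M] (f : G.OEdge → M) :
    ∑ o : G.OEdge, f o.rev = ∑ o, f o :=
  OEdge.rev_involutive.bijective.sum_comp f

/-- The orientations of an edge `e` are `orient e` and its reversal, which coincide iff `e` is
a loop. -/
lemma sum_oedge_eq_two_mul_sum_orient (f : G.OEdge → ℝ) (hf : ∀ o, f o.rev = f o)
    (hloop : ∀ o : G.OEdge, o.rev = o → f o = 0) :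
    ∑ o, f o = 2 * ∑ e, f (G.orient e) := by
  rw [← Finset.sum_fiberwise Finset.univ OEdge.edge f, Finset.mul_sum]
  refine Finset.sum_congr rfl fun e _ => ?_
  have hfiber : Finset.univ.filter (fun o : G.OEdge => o.edge = e) =
      {G.orient e, (G.orient e).rev} := by
    ext o
    simp only [Finset.mem_filter, Finset.mem_univ, true_and, Finset.mem_insert,
      Finset.mem_singleton]
    constructor
    · exact fun h => OEdge.eq_or_eq_rev (h.trans (G.orient_edge e).symm)
    · rintro (rfl | rfl) <;> exact G.orient_edge e
  rw [hfiber]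
  by_cases hl : (G.orient e).rev = G.orient e
  · rw [hl, Finset.pair_eq_singleton, Finset.sum_singleton, hloop _ hl, mul_zero]
  · rw [Finset.sum_pair (Ne.symm hl), hf]
    ring

namespace IsCurrent

variable {I J : G.OEdge → ℝ}

lemma eq_zero_of_rev_eq (hI : G.IsCurrent I) {o : G.OEdge} (h : o.rev = o) : I o = 0 := by
  have := hI o
  rw [h] at this
  linarith

lemma add_smul (hI : G.IsCurrent I) (hJ : G.IsCurrent J) (t : ℝ) :
    G.IsCurrent (I + t • J) := fun o => by
  simp only [Pi.add_apply, Pi.smul_apply, smul_eq_mul, hI o, hJ o]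
  ring

lemma sub (hI : G.IsCurrent I) (hJ : G.IsCurrent J) : G.IsCurrent (I - J) := fun o => by
  simp only [Pi.sub_apply, hI o, hJ o]
  ring

end IsCurrent

lemma isCurrent_sub_comp_rev (J : G.OEdge → ℝ) : G.IsCurrent (J - J ∘ OEdge.rev) := fun o => by
  simp only [Pi.sub_apply, Function.comp_apply, OEdge.rev_rev]
  ring

variable (G) in
noncomputable def outflow : (G.OEdge → ℝ) →ₗ[ℝ] (G.V → ℝ) where
  toFun J x := ∑ o ∈ Finset.univ.filter (fun o : G.OEdge => o.src = x), J o
  map_add' J K := by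
    ext x
    simp only [Pi.add_apply, Finset.sum_add_distrib]
  map_smul' t J := by
    ext x
    simp only [Pi.smul_apply, smul_eq_mul, RingHom.id_apply, Finset.mul_sum]

lemma outflow_apply (J : G.OEdge → ℝ) (x : G.V) :
    G.outflow J x = ∑ o ∈ Finset.univ.filter (fun o : G.OEdge => o.src = x), J o := rfl

lemma consistent_iff_outflow_eq {I : G.OEdge → ℝ} {D : G.V → ℝ} :
    G.Consistent I D ↔ G.outflow I = D :=
  funext_iff.symm

lemma outflow_single (o : G.OEdge) : G.outflow (Pi.single o 1) = Pi.single o.src 1 := by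
  ext x
  rw [outflow_apply, Finset.sum_pi_single']
  simp only [Finset.mem_filter, Finset.mem_univ, true_and, Pi.single_apply, eq_comm]

lemma outflow_single_sub_comp_rev (o : G.OEdge) :
    G.outflow (Pi.single o 1 - Pi.single o 1 ∘ OEdge.rev) =
      Pi.single o.src 1 - Pi.single o.tgt 1 := by
  have hrev : (Pi.single o 1 : G.OEdge → ℝ) ∘ OEdge.rev = Pi.single o.rev 1 := by
    ext o'
    simp only [Function.comp_apply, Pi.single_apply, OEdge.rev_involutive.eq_iff.symm]
  rw [hrev, map_sub, outflow_single, outflow_single, OEdge.rev_src]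

lemma sum_sub_mul_eq_two_mul_sum_outflow {J : G.OEdge → ℝ} (hJ : G.IsCurrent J)
    (v : G.V → ℝ) :
    ∑ o, (v o.src - v o.tgt) * J o = 2 * ∑ x, v x * G.outflow J x := by
  have htgt : ∑ o, v o.tgt * J o = -∑ o, v o.src * J o := by
    rw [← sum_comp_rev, ← Finset.sum_neg_distrib]
    exact Finset.sum_congr rfl fun o _ => by rw [OEdge.rev_tgt, hJ o, mul_neg]
  have hsrc : ∑ o, v o.src * J o = ∑ x, v x * G.outflow J x := by
    rw [← Finset.sum_fiberwise Finset.univ OEdge.src]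
    refine Finset.sum_congr rfl fun x _ => ?_
    rw [outflow_apply, Finset.mul_sum]
    exact Finset.sum_congr rfl fun o ho => by rw [(Finset.mem_filter.mp ho).2]
  simp only [sub_mul, Finset.sum_sub_distrib, htgt, hsrc]
  ring

variable (G) in
noncomputable def powerForm (μ : G.E → ℝ) (I : G.OEdge → ℝ) : Module.Dual ℝ (G.OEdge → ℝ) where
  toFun J := ∑ o, μ o.edge * I o * J o
  map_add' J K := by
    simp only [Pi.add_apply, mul_add, Finset.sum_add_distrib]
  map_smul' t J := by
    simp only [Pi.smul_apply, smul_eq_mul, RingHom.id_apply, Finset.mul_sum]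
    exact Finset.sum_congr rfl fun o _ => by ring

lemma powerForm_apply (μ : G.E → ℝ) (I J : G.OEdge → ℝ) :
    G.powerForm μ I J = ∑ o, μ o.edge * I o * J o := rfl

lemma powerForm_single (μ : G.E → ℝ) (I : G.OEdge → ℝ) (o : G.OEdge) :
    G.powerForm μ I (Pi.single o 1) = μ o.edge * I o := by
  simp [powerForm_apply, Pi.single_apply]

lemma powerForm_sub_comp_rev (μ : G.E → ℝ) {I : G.OEdge → ℝ} (hI : G.IsCurrent I)
    (J : G.OEdge → ℝ) : G.powerForm μ I (J - J ∘ OEdge.rev) = 2 * G.powerForm μ I J := by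
  have hrev : G.powerForm μ I (J ∘ OEdge.rev) = -G.powerForm μ I J := by
    rw [powerForm_apply, powerForm_apply, ← sum_comp_rev, ← Finset.sum_neg_distrib]
    exact Finset.sum_congr rfl fun o _ => by
      rw [OEdge.rev_edge, hI o, Function.comp_apply, OEdge.rev_rev, mul_neg, neg_mul]
  rw [map_sub, hrev]
  ring

lemma power_eq_powerForm_div_two (μ : G.E → ℝ) {I : G.OEdge → ℝ} (hI : G.IsCurrent I) :
    G.power μ I = G.powerForm μ I I / 2 := by
  rw [powerForm_apply, sum_oedge_eq_two_mul_sum_orient]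
  · simp only [power, orient_edge, sq, mul_assoc]
    ring
  · intro o
    rw [hI o, OEdge.rev_edge]
    ring
  · intro o ho
    rw [hI.eq_zero_of_rev_eq ho, mul_zero]

lemma power_add_smul (μ : G.E → ℝ) {I J : G.OEdge → ℝ} (hI : G.IsCurrent I)
    (hJ : G.IsCurrent J) (t : ℝ) :
    G.power μ (I + t • J) = G.power μ I + t * G.powerForm μ I J + t ^ 2 * G.power μ J := by
  simp only [power_eq_powerForm_div_two μ (hI.add_smul hJ t), power_eq_powerForm_div_two μ hI,
    power_eq_powerForm_div_two μ hJ, powerForm_apply, Pi.add_apply, Pi.smul_apply, smul_eq_mul,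
    Finset.mul_sum, ← Finset.sum_add_distrib, Finset.sum_div]
  exact Finset.sum_congr rfl fun o _ => by ring

lemma power_nonneg {μ : G.E → ℝ} (hμ : ∀ e, 0 ≤ μ e) (I : G.OEdge → ℝ) : 0 ≤ G.power μ I :=
  Finset.sum_nonneg fun e _ => mul_nonneg (hμ e) (sq_nonneg _)

lemma powerForm_eq_zero_of_forall_power_le (μ : G.E → ℝ) {I J : G.OEdge → ℝ}
    (hI : G.IsCurrent I) (hJ : G.IsCurrent J)
    (hmin : ∀ t : ℝ, G.power μ I ≤ G.power μ (I + t • J)) : G.powerForm μ I J = 0 := by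
  have hquad : ∀ t : ℝ, 0 ≤ G.power μ J * (t * t) + G.powerForm μ I J * t + 0 := fun t => by
    have := hmin t
    rw [power_add_smul μ hI hJ] at this
    linarith
  have hdiscrim := discrim_le_zero hquad
  rw [discrim] at hdiscrim
  exact pow_eq_zero_iff two_ne_zero |>.mp (le_antisymm (by linarith) (sq_nonneg _))

lemma powerForm_eq_zero_of_voltage {μ : G.E → ℝ} (hμ : ∀ e, μ e ≠ 0) {I J : G.OEdge → ℝ}
    {v : G.V → ℝ} (hv : ∀ o : G.OEdge, I o = (v o.src - v o.tgt) / μ o.edge)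
    (hJ : G.IsCurrent J) (hJ0 : G.outflow J = 0) : G.powerForm μ I J = 0 := by
  have hdrop : ∀ o : G.OEdge, μ o.edge * I o = v o.src - v o.tgt := fun o => by
    rw [hv o, mul_div_cancel₀ _ (hμ _)]
  simp only [powerForm_apply, hdrop, sum_sub_mul_eq_two_mul_sum_outflow hJ, hJ0, Pi.zero_apply,
    mul_zero, Finset.sum_const_zero]

/-- The range of a dual map is the annihilator of the kernel: here, of the kernel of
`J ↦ outflow (J - J ∘ rev)`, on which `powerForm μ I` vanishes. -/
lemma exists_voltage_of_powerForm_eq_zero (μ : G.E → ℝ) {I : G.OEdge → ℝ}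
    (hI : G.IsCurrent I)
    (horth : ∀ J : G.OEdge → ℝ, G.IsCurrent J → G.outflow J = 0 → G.powerForm μ I J = 0) :
    ∃ v : G.V → ℝ, ∀ o : G.OEdge, μ o.edge * I o = v o.src - v o.tgt := by
  let T := G.outflow ∘ₗ (LinearMap.id - LinearMap.funLeft ℝ ℝ OEdge.rev)
  have hT : ∀ J, T J = G.outflow (J - J ∘ OEdge.rev) := fun J => rfl
  have hker : G.powerForm μ I ∈ (LinearMap.ker T).dualAnnihilator := by
    refine (Submodule.mem_dualAnnihilator _).2 fun J hJ => ?_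
    have hcirc := horth _ (isCurrent_sub_comp_rev J) ((hT J).symm.trans hJ)
    rw [powerForm_sub_comp_rev μ hI] at hcirc
    linarith
  rw [← LinearMap.range_dualMap_eq_dualAnnihilator_ker] at hker
  obtain ⟨ψ, hψ⟩ := hker
  refine ⟨fun x => ψ (Pi.single x 1), fun o => ?_⟩
  have h := LinearMap.congr_fun hψ (Pi.single o 1)
  rw [LinearMap.dualMap_apply, hT, outflow_single_sub_comp_rev, map_sub, powerForm_single] at h
  exact h.symm

end RGraph

/-- Jeans' Least Power Theorem -/
theorem stmt4 (G : RGraph) (μ : G.E → ℝ) (hμ : ∀ e : G.E, 0 < μ e) (D : G.V → ℝ)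
    (I : G.OEdge → ℝ) (hI : G.IsCurrent I) (hID : G.Consistent I D) :
    (∃ v : G.V → ℝ, ∀ o : G.OEdge, I o = (v o.src - v o.tgt) / μ o.edge) ↔
    (∀ I' : G.OEdge → ℝ, G.IsCurrent I' → G.Consistent I' D →
      G.power μ I ≤ G.power μ I') := by
  rw [RGraph.consistent_iff_outflow_eq] at hID
  constructor
  · rintro ⟨v, hv⟩ I' hI' hID'
    rw [RGraph.consistent_iff_outflow_eq] at hID'
    have hJ0 : G.outflow (I' - I) = 0 := by rw [map_sub, hID, hID', sub_self]
    have horth := RGraph.powerForm_eq_zero_of_voltage (fun e => (hμ e).ne') hv (hI'.sub hI) hJ0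
    have hsplit := RGraph.power_add_smul μ hI (hI'.sub hI) 1
    rw [one_smul, add_sub_cancel, horth, mul_zero, add_zero, one_pow, one_mul] at hsplit
    rw [hsplit]
    exact le_add_of_nonneg_right (RGraph.power_nonneg (fun e => (hμ e).le) _)
  · intro hmin
    obtain ⟨v, hv⟩ := RGraph.exists_voltage_of_powerForm_eq_zero μ hI fun J hJ hJ0 =>
      RGraph.powerForm_eq_zero_of_forall_power_le μ hI hJ fun t =>
        hmin _ (hI.add_smul hJ t) (by
          rw [RGraph.consistent_iff_outflow_eq, map_add, map_smul, hJ0, smul_zero, add_zero, hID])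
    exact ⟨v, fun o => by rw [← hv, mul_div_cancel_left₀ _ (hμ _).ne']⟩
end

section
/- Let (Γ, μ) be a proper resistive network with Γ connected and let D ∈ ℝ^{Vert(Γ)} be a zero-sum vector. Then g(Γ, μ; D, D) equals the minimum of the power dissipated Σ_{e ∈ Ed(Γ)} μ(e) I(e)² over all edge current assignments I consistent with D; moreover this minimum is attained by I(e : i → j) = (v_i − v_j)/μ(e) for any v with Lv = D. -/
open Classical
open scoped BigOperators

/-!
Write `J(e : i → j) = (v_i − v_j)/μ(e)`. Summation by parts over oriented edges (a discrete
Tellegen theorem) turns `Σ_x g_x · (net outflow of a current K at x)` into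
`Σ_e (g_i − g_j) K(e : i → j)`. With `g = v` and `K = J` this gives `Dᵀv = Σ_e μ(e) J(e)²`;
with `K = I − J`, whose net outflow vanishes everywhere, it shows that `I − J` is
orthogonal to `J` for the inner product `Σ_e μ(e) I(e) I'(e)`, so that
`power I = power J + power (I − J) ≥ power J`.
-/

namespace ResGraph

variable {G : ResGraph}

namespace OEdge

lemma rev_eq_self {o : G.OEdge} (h : o.src = o.tgt) : o.rev = o :=
  Subtype.ext (Prod.ext rfl (Prod.ext h.symm h))

lemma eq_or_eq_rev_of_edge_eq {o o' : G.OEdge} (h : o.edge = o'.edge) :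
    o = o' ∨ o = o'.rev := by
  have hends : s(o.src, o.tgt) = s(o'.src, o'.tgt) := o.2.symm.trans ((congrArg G.ends h).trans o'.2)
  rcases Sym2.eq_iff.mp hends with ⟨hs, ht⟩ | ⟨hs, ht⟩
  · exact Or.inl (Subtype.ext (Prod.ext h (Prod.ext hs ht)))
  · exact Or.inr (Subtype.ext (Prod.ext h (Prod.ext hs ht)))

end OEdge

lemma filter_edge_eq (e : G.E) :
    Finset.univ.filter (fun o : G.OEdge => o.edge = e) = {G.orient e, (G.orient e).rev} := by
  ext o
  simp only [Finset.mem_filter, Finset.mem_univ, true_and, Finset.mem_insert,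
    Finset.mem_singleton]
  constructor
  · intro h
    exact OEdge.eq_or_eq_rev_of_edge_eq (h.trans (G.orient_edge e).symm)
  · rintro (rfl | rfl) <;> exact G.orient_edge e

lemma IsCurrent.apply_eq_zero_of_src_eq_tgt {K : G.OEdge → ℝ} (hK : G.IsCurrent K)
    {o : G.OEdge} (h : o.src = o.tgt) : K o = 0 := by
  have := hK o
  rw [OEdge.rev_eq_self h] at this
  linarith

lemma IsCurrent.sub {I J : G.OEdge → ℝ} (hI : G.IsCurrent I) (hJ : G.IsCurrent J) :
    G.IsCurrent (I - J) := fun o => by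
  simp only [Pi.sub_apply, hI o, hJ o]
  ring

lemma IsCurrent.sum_filter_edge_eq {K : G.OEdge → ℝ} (hK : G.IsCurrent K) (g : G.V → ℝ)
    (e : G.E) :
    ∑ o ∈ Finset.univ.filter (fun o : G.OEdge => o.edge = e), g o.src * K o
      = (g (G.orient e).src - g (G.orient e).tgt) * K (G.orient e) := by
  rw [filter_edge_eq]
  by_cases hloop : (G.orient e).src = (G.orient e).tgt
  · rw [OEdge.rev_eq_self hloop, Finset.pair_eq_singleton, Finset.sum_singleton,
      hK.apply_eq_zero_of_src_eq_tgt hloop]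
    ring
  · have hne : G.orient e ≠ (G.orient e).rev := fun h => hloop (congrArg OEdge.src h)
    rw [Finset.sum_pair hne, hK (G.orient e)]
    simp only [OEdge.rev, OEdge.src, OEdge.tgt]
    ring

theorem IsCurrent.sum_mul_outflow {K : G.OEdge → ℝ} (hK : G.IsCurrent K) (g : G.V → ℝ) :
    ∑ x : G.V, g x * ∑ o ∈ Finset.univ.filter (fun o : G.OEdge => o.src = x), K o
      = ∑ e : G.E, (g (G.orient e).src - g (G.orient e).tgt) * K (G.orient e) := by
  calc ∑ x : G.V, g x * ∑ o ∈ Finset.univ.filter (fun o : G.OEdge => o.src = x), K o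
      = ∑ x : G.V, ∑ o ∈ Finset.univ.filter (fun o : G.OEdge => o.src = x), g o.src * K o := by
        refine Finset.sum_congr rfl fun x _ => ?_
        rw [Finset.mul_sum]
        refine Finset.sum_congr rfl fun o ho => ?_
        rw [(Finset.mem_filter.mp ho).2]
    _ = ∑ o : G.OEdge, g o.src * K o := Finset.sum_fiberwise _ _ _
    _ = ∑ e : G.E, ∑ o ∈ Finset.univ.filter (fun o : G.OEdge => o.edge = e),
          g o.src * K o := (Finset.sum_fiberwise _ _ _).symm
    _ = _ := Finset.sum_congr rfl fun e _ => hK.sum_filter_edge_eq g e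

lemma sum_filter_src_eq (x : G.V) (F : G.E → G.V → ℝ) :
    ∑ o ∈ Finset.univ.filter (fun o : G.OEdge => o.src = x), F o.edge o.tgt
      = ∑ j : G.V, ∑ e : G.E, if G.ends e = s(x, j) then F e j else 0 := by
  rw [← Finset.sum_product' (f := fun j e => if G.ends e = s(x, j) then F e j else 0),
    ← Finset.sum_filter]
  refine Finset.sum_bij (fun o _ => (o.tgt, o.edge)) ?_ ?_ ?_ (fun _ _ => rfl)
  · intro o ho
    simp only [Finset.mem_filter, Finset.mem_univ, true_and] at ho
    simp only [Finset.mem_filter, Finset.mem_product, Finset.mem_univ, true_and]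
    exact ho ▸ o.2
  · intro o ho o' ho' h
    simp only [Finset.mem_filter, Finset.mem_univ, true_and] at ho ho'
    simp only [Prod.mk.injEq] at h
    exact Subtype.ext (Prod.ext h.2 (Prod.ext (ho.trans ho'.symm) h.1))
  · intro p hp
    exact ⟨⟨(p.2, x, p.1), (Finset.mem_filter.mp hp).2⟩,
      Finset.mem_filter.mpr ⟨Finset.mem_univ _, rfl⟩, rfl⟩

noncomputable def potentialCurrent (μ : G.E → ℝ) (v : G.V → ℝ) : G.OEdge → ℝ :=
  fun o => (v o.src - v o.tgt) / μ o.edge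

lemma isCurrent_potentialCurrent (μ : G.E → ℝ) (v : G.V → ℝ) :
    G.IsCurrent (potentialCurrent μ v) := fun o => by
  simp only [potentialCurrent, OEdge.rev, OEdge.src, OEdge.tgt, OEdge.edge]
  ring

lemma consistent_potentialCurrent_lap (μ : G.E → ℝ) (v : G.V → ℝ) :
    G.Consistent (potentialCurrent μ v) (G.lap μ v) := fun x => by
  calc ∑ o ∈ Finset.univ.filter (fun o : G.OEdge => o.src = x), potentialCurrent μ v o
      = ∑ o ∈ Finset.univ.filter (fun o : G.OEdge => o.src = x),
          (v x - v o.tgt) / μ o.edge :=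
        Finset.sum_congr rfl fun o ho => by
          rw [potentialCurrent, (Finset.mem_filter.mp ho).2]
    _ = G.lap μ v x := sum_filter_src_eq x fun e j => (v x - v j) / μ e

lemma mul_potentialCurrent_orient {μ : G.E → ℝ} (v : G.V → ℝ) {e : G.E} (he : μ e ≠ 0) :
    μ e * potentialCurrent μ v (G.orient e) = v (G.orient e).src - v (G.orient e).tgt := by
  rw [potentialCurrent, G.orient_edge e]
  field_simp

lemma Consistent.sub {I J : G.OEdge → ℝ} {D : G.V → ℝ} (hI : G.Consistent I D)
    (hJ : G.Consistent J D) (x : G.V) :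
    ∑ o ∈ Finset.univ.filter (fun o : G.OEdge => o.src = x), (I - J) o = 0 := by
  simp only [Pi.sub_apply, Finset.sum_sub_distrib, hI x, hJ x, sub_self]

lemma power_add (μ : G.E → ℝ) (J K : G.OEdge → ℝ) :
    G.power μ (J + K) = G.power μ J
      + 2 * ∑ e : G.E, μ e * J (G.orient e) * K (G.orient e) + G.power μ K := by
  simp only [power, Pi.add_apply, Finset.mul_sum, ← Finset.sum_add_distrib]
  exact Finset.sum_congr rfl fun e _ => by ring

lemma power_nonneg {μ : G.E → ℝ} (hμ : ∀ e, 0 ≤ μ e) (K : G.OEdge → ℝ) :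
    0 ≤ G.power μ K :=
  Finset.sum_nonneg fun e _ => mul_nonneg (hμ e) (sq_nonneg _)

variable {μ : G.E → ℝ} (hμ : ∀ e, 0 < μ e) (v : G.V → ℝ)
include hμ

lemma sum_lap_mul_eq_power :
    ∑ x : G.V, G.lap μ v x * v x = G.power μ (potentialCurrent μ v) := by
  calc ∑ x : G.V, G.lap μ v x * v x
      = ∑ x : G.V, v x * ∑ o ∈ Finset.univ.filter (fun o : G.OEdge => o.src = x),
          potentialCurrent μ v o :=
        Finset.sum_congr rfl fun x _ => by rw [consistent_potentialCurrent_lap μ v x, mul_comm]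
    _ = G.power μ (potentialCurrent μ v) := by
        rw [(isCurrent_potentialCurrent μ v).sum_mul_outflow]
        refine Finset.sum_congr rfl fun e _ => ?_
        rw [← mul_potentialCurrent_orient v (hμ e).ne']
        ring

theorem power_potentialCurrent_le {I : G.OEdge → ℝ} (hI : G.IsCurrent I)
    (hIc : G.Consistent I (G.lap μ v)) :
    G.power μ (potentialCurrent μ v) ≤ G.power μ I := by
  set J := potentialCurrent μ v
  have hK := hI.sub (isCurrent_potentialCurrent μ v)
  have horth : ∑ e : G.E, μ e * J (G.orient e) * (I - J) (G.orient e) = 0 := by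
    calc ∑ e : G.E, μ e * J (G.orient e) * (I - J) (G.orient e)
        = ∑ x : G.V, v x * ∑ o ∈ Finset.univ.filter (fun o : G.OEdge => o.src = x),
            (I - J) o := by
          rw [hK.sum_mul_outflow]
          exact Finset.sum_congr rfl fun e _ => by rw [mul_potentialCurrent_orient v (hμ e).ne']
      _ = 0 := Finset.sum_eq_zero fun x _ => by
          rw [hIc.sub (consistent_potentialCurrent_lap μ v) x, mul_zero]
  have hsplit := power_add μ J (I - J)
  rw [add_sub_cancel, horth] at hsplit
  linarith [power_nonneg (fun e => (hμ e).le) (I - J)]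

end ResGraph

theorem stmt5_general (G : ResGraph) (μ : G.E → ℝ) (hμ : ∀ e : G.E, 0 < μ e)
    (D : G.V → ℝ) (v : G.V → ℝ) (hv : G.lap μ v = D) :
    G.IsCurrent (fun o => (v o.src - v o.tgt) / μ o.edge) ∧
    G.Consistent (fun o => (v o.src - v o.tgt) / μ o.edge) D ∧
    (∑ x : G.V, D x * v x) = G.power μ (fun o => (v o.src - v o.tgt) / μ o.edge) ∧
    ∀ I : G.OEdge → ℝ, G.IsCurrent I → G.Consistent I D →
      (∑ x : G.V, D x * v x) ≤ G.power μ I := by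
  subst hv
  refine ⟨ResGraph.isCurrent_potentialCurrent μ v,
    ResGraph.consistent_potentialCurrent_lap μ v, ResGraph.sum_lap_mul_eq_power hμ v,
    fun I hI hIc => ?_⟩
  rw [ResGraph.sum_lap_mul_eq_power hμ v]
  exact ResGraph.power_potentialCurrent_le hμ v hI hIc

theorem stmt5 (G : ResGraph) (hG : G.Connected) (μ : G.E → ℝ) (hμ : ∀ e : G.E, 0 < μ e)
    (D : G.V → ℝ) (hD : ∑ x : G.V, D x = 0) (v : G.V → ℝ) (hv : G.lap μ v = D) :
    G.IsCurrent (fun o => (v o.src - v o.tgt) / μ o.edge) ∧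
    G.Consistent (fun o => (v o.src - v o.tgt) / μ o.edge) D ∧
    (∑ x : G.V, D x * v x) = G.power μ (fun o => (v o.src - v o.tgt) / μ o.edge) ∧
    ∀ I : G.OEdge → ℝ, G.IsCurrent I → G.Consistent I D →
      (∑ x : G.V, D x * v x) ≤ G.power μ I :=
  stmt5_general G μ hμ D v hv
end

section
/- Let Γ be a connected graph and let D ∈ ℝ^{Vert(Γ)} be a zero-sum vector. Then the Green's function is concave in the resistances: for all μ₁, …, μ_n ∈ ℝ_{>0}^{Ed(Γ)} one has g(Γ, Σ_{i=1}^n μ_i; D, D) ≥ Σ_{i=1}^n g(Γ, μ_i; D, D). -/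
open Classical
open scoped BigOperators

/-
Write `E_μ(u, w) = Σ_{e : i → j} (u i - u j) (w i - w j) / μ e` for the Dirichlet form,
summed over oriented edges. Summation by parts gives
`E_μ(u, w) = 2 uᵀ L_μ w`, so with `μ = Σ μ_k`, `L_μ v = D` and `L_{μ_k} w_k = D`, both
`E_μ(w_k, v)` and `E_{μ_k}(w_k, w_k)` equal `2 Dᵀ w_k`. Edgewise AM-GM,
`2 a b / μ ≤ a² / μ_k + μ_k (b / μ)²`, then yields `2 Dᵀ w_k ≤ Σ_e μ_k e (Δv / μ e)²`;
summing over `k` the right-hand side becomes `E_μ(v, v) = 2 Dᵀ v`.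
-/

section

variable {K : Type*} [Field K]

lemma mul_div_sq_self (m x : K) : m * (x / m) ^ 2 = x * x / m := by
  rcases eq_or_ne m 0 with rfl | hm
  · simp
  · field_simp

lemma two_mul_div_le_add [LinearOrder K] [IsStrictOrderedRing K] (a b p s : K) (hp : 0 < p) :
    2 * (a * b / s) ≤ a * a / p + p * (b / s) ^ 2 := by
  rw [mul_div_assoc, ← sub_le_iff_le_add, le_div_iff₀ hp]
  nlinarith [sq_nonneg (a - p * (b / s))]

end

namespace RGraph

variable {G : RGraph}

lemma OEdge.rev_rev_s6 (o : G.OEdge) : o.rev.rev = o := rfl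

lemma OEdge.rev_src_s6 (o : G.OEdge) : o.rev.src = o.tgt := rfl

lemma OEdge.rev_tgt_s6 (o : G.OEdge) : o.rev.tgt = o.src := rfl

lemma OEdge.rev_edge_s6 (o : G.OEdge) : o.rev.edge = o.edge := rfl

lemma sum_oEdge_rev (f : G.OEdge → ℝ) : ∑ o : G.OEdge, f o.rev = ∑ o : G.OEdge, f o :=
  Equiv.sum_comp (Function.Involutive.toPerm _ OEdge.rev_rev_s6) f

lemma sum_ite_ends_eq_sum_oEdge (f : G.V → G.V → G.E → ℝ) :
    ∑ i : G.V, ∑ j : G.V, ∑ e : G.E, (if G.ends e = s(i, j) then f i j e else 0)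
      = ∑ o : G.OEdge, f o.src o.tgt o.edge := by
  refine Eq.trans ?_ (Finset.sum_subtype
    (Finset.univ.filter fun x : G.E × G.V × G.V => G.ends x.1 = s(x.2.1, x.2.2)) (by simp)
    fun x => f x.2.1 x.2.2 x.1)
  simp only [Finset.sum_filter, Fintype.sum_prod_type]
  rw [eq_comm, Finset.sum_comm]
  exact Finset.sum_congr rfl fun i _ => Finset.sum_comm

/-- Summed over oriented edges, so every edge contributes twice. -/
noncomputable def dirichletForm (μ : G.E → ℝ) (u w : G.V → ℝ) : ℝ :=
  ∑ o : G.OEdge, (u o.src - u o.tgt) * (w o.src - w o.tgt) / μ o.edge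

lemma sum_mul_lap (μ : G.E → ℝ) (u w : G.V → ℝ) :
    ∑ x : G.V, u x * G.lap μ w x
      = ∑ o : G.OEdge, u o.src * ((w o.src - w o.tgt) / μ o.edge) := by
  simp only [lap, Finset.mul_sum, mul_ite, mul_zero]
  exact sum_ite_ends_eq_sum_oEdge fun i j e => u i * ((w i - w j) / μ e)

lemma dirichletForm_eq_two_mul_sum_mul_lap (μ : G.E → ℝ) (u w : G.V → ℝ) :
    dirichletForm μ u w = 2 * ∑ x : G.V, u x * G.lap μ w x := by
  rw [two_mul, sum_mul_lap]
  nth_rw 1 [← sum_oEdge_rev]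
  rw [dirichletForm, ← Finset.sum_add_distrib]
  refine Finset.sum_congr rfl fun o _ => ?_
  rw [OEdge.rev_src_s6, OEdge.rev_tgt_s6, OEdge.rev_edge_s6]
  ring

lemma dirichletForm_eq_of_lap_eq {μ : G.E → ℝ} {w D : G.V → ℝ} (h : G.lap μ w = D)
    (u : G.V → ℝ) : dirichletForm μ u w = 2 * ∑ x : G.V, D x * u x := by
  simp_rw [dirichletForm_eq_two_mul_sum_mul_lap, h, mul_comm (u _)]

lemma two_mul_dirichletForm_sub_le {μ : G.E → ℝ} (hμ : ∀ e, 0 < μ e) (ν : G.E → ℝ)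
    (u v : G.V → ℝ) :
    2 * dirichletForm ν u v - dirichletForm μ u u
      ≤ ∑ o : G.OEdge, μ o.edge * ((v o.src - v o.tgt) / ν o.edge) ^ 2 := by
  rw [sub_le_iff_le_add', dirichletForm, dirichletForm, Finset.mul_sum, ← Finset.sum_add_distrib]
  exact Finset.sum_le_sum fun o _ => two_mul_div_le_add _ _ _ _ (hμ o.edge)

end RGraph

theorem stmt6_general (G : RGraph) (D : G.V → ℝ)
    (n : ℕ) (μ : Fin n → G.E → ℝ) (hμ : ∀ (k : Fin n) (e : G.E), 0 < μ k e)
    (v : G.V → ℝ) (hv : G.lap (fun e => ∑ k : Fin n, μ k e) v = D)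
    (w : Fin n → G.V → ℝ) (hw : ∀ k : Fin n, G.lap (μ k) (w k) = D) :
    ∑ k : Fin n, ∑ x : G.V, D x * w k x ≤ ∑ x : G.V, D x * v x := by
  set μsum : G.E → ℝ := fun e => ∑ k : Fin n, μ k e
  have hterm (k : Fin n) : 2 * ∑ x : G.V, D x * w k x
      ≤ ∑ o : G.OEdge, μ k o.edge * ((v o.src - v o.tgt) / μsum o.edge) ^ 2 := by
    have h := RGraph.two_mul_dirichletForm_sub_le (hμ k) μsum (w k) v
    rw [RGraph.dirichletForm_eq_of_lap_eq hv, RGraph.dirichletForm_eq_of_lap_eq (hw k)] at h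
    linarith
  have hsum : ∑ k : Fin n, ∑ o : G.OEdge,
      μ k o.edge * ((v o.src - v o.tgt) / μsum o.edge) ^ 2 = RGraph.dirichletForm μsum v v := by
    rw [Finset.sum_comm]
    refine Finset.sum_congr rfl fun o _ => ?_
    rw [← Finset.sum_mul, mul_div_sq_self]
  have h := Finset.sum_le_sum fun k (_ : k ∈ Finset.univ) => hterm k
  rw [← Finset.mul_sum, hsum, RGraph.dirichletForm_eq_of_lap_eq hv] at h
  linarith

theorem stmt6 (G : RGraph) (hG : G.Connected) (D : G.V → ℝ) (hD : ∑ x : G.V, D x = 0)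
    (n : ℕ) (μ : Fin n → G.E → ℝ) (hμ : ∀ (k : Fin n) (e : G.E), 0 < μ k e)
    (v : G.V → ℝ) (hv : G.lap (fun e => ∑ k : Fin n, μ k e) v = D)
    (w : Fin n → G.V → ℝ) (hw : ∀ k : Fin n, G.lap (μ k) (w k) = D) :
    ∑ k : Fin n, ∑ x : G.V, D x * w k x ≤ ∑ x : G.V, D x * v x :=
  stmt6_general G D n μ hμ v hv w hw
end

section
/- Let Γ be a graph, S ⊆ Ed(Γ), and F ⊆ Ed(Γ) such that F ∩ S is a maximal forest of Γ|_S. Then F is cycle-free in Γ (i.e. Γ|_F contains no cycle) if and only if F∖S is cycle-free in the contracted graph Γ/S. -/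
open Classical
open scoped BigOperators

/-- A graph: a finite set of vertices, a finite set of edges, and a map assigning to
each edge its unordered pair of endpoints (loops and parallel edges allowed). -/
structure FinGraph where
  V : Type
  E : Type
  [fintV : Fintype V]
  [decV : DecidableEq V]
  [fintE : Fintype E]
  [decE : DecidableEq E]
  ends : E → Sym2 V

attribute [instance] FinGraph.fintV FinGraph.decV FinGraph.fintE FinGraph.decE

namespace FinGraph

variable (G : FinGraph)

/-- The Laplacian of the resistive network `(G, μ)` applied to a voltage assignment `v`:
`(L v) i = Σ_j Σ_{edges e : i → j} (v i − v j) / μ e`. -/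
noncomputable def lap (μ : G.E → ℝ) (v : G.V → ℝ) : G.V → ℝ := fun i =>
  ∑ j : G.V, ∑ e : G.E, if G.ends e = s(i, j) then (v i - v j) / μ e else 0

/-- `i` and `j` are joined by an edge belonging to `F`. -/
def Adj (F : Set G.E) (i j : G.V) : Prop := ∃ e ∈ F, G.ends e = s(i, j)

/-- `i` and `j` lie in the same connected component of the subgraph `Γ|_F`
(the subgraph with all vertices of `Γ` and edge set `F`). -/
def Reach (F : Set G.E) (i j : G.V) : Prop := Relation.EqvGen (G.Adj F) i j

/-- The subgraph `Γ|_F` is connected. -/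
def ConnOn (F : Set G.E) : Prop := ∀ i j : G.V, G.Reach F i j

/-- The graph `G` is connected. -/
def Connected : Prop := G.ConnOn Set.univ

/-- The set of connected components of the subgraph `Γ|_F`. -/
def Comp (F : Set G.E) : Type := Quotient (Relation.EqvGen.setoid (G.Adj F))

/-- A walk from `i` to `j`: a finite sequence of vertices together with a choice of an
edge from each vertex to the next. -/
inductive Walk : G.V → G.V → Type
  | nil (i : G.V) : Walk i i
  | cons {i j k : G.V} (e : G.E) (he : G.ends e = s(i, j)) (w : Walk j k) : Walk i k

namespace Walk

variable {G}

/-- The list of vertices visited by a walk, in order (starting vertex first). -/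
def vertices : ∀ {i j : G.V}, G.Walk i j → List G.V
  | _, _, .nil a => [a]
  | _, _, @Walk.cons _ a _ _ _ _ w => a :: vertices w

/-- The list of edges traversed by a walk, in order. -/
def edges : ∀ {i j : G.V}, G.Walk i j → List G.E
  | _, _, .nil _ => []
  | _, _, .cons e _ w => e :: edges w

/-- The list of steps `(source, edge, target)` of a walk. -/
def steps : ∀ {i j : G.V}, G.Walk i j → List (G.V × G.E × G.V)
  | _, _, .nil _ => []
  | _, _, @Walk.cons _ a b _ e _ w => (a, e, b) :: steps w

/-- All edges of the walk lie in the edge set `F`. -/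
def In {i j : G.V} (w : G.Walk i j) (F : Set G.E) : Prop := ∀ e ∈ w.edges, e ∈ F

/-- A path: a walk all of whose vertices are distinct, except possibly the start and the
end vertex (and which does not traverse any edge twice). -/
def IsPath {i j : G.V} (w : G.Walk i j) : Prop :=
  w.vertices.dropLast.Nodup ∧ w.vertices.tail.Nodup ∧ w.edges.Nodup

/-- Change the (definitionally equal) endpoints of a walk. -/
def copy : ∀ {i j i' j' : G.V}, G.Walk i j → i = i' → j = j' → G.Walk i' j'
  | _, _, _, _, w, rfl, rfl => w

variable (G)

end Walk

/-- `F` is cycle-free: the subgraph `Γ|_F` contains no cycle, i.e. every closed path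
with edges in `F` is trivial. -/
def CycleFree (F : Set G.E) : Prop :=
  ∀ (i : G.V) (w : G.Walk i i), w.In F → w.IsPath → w.edges = []

/-- `T` is a spanning tree of `G`: the subgraph `Γ|_T` is connected and cycle-free. -/
def IsSpanningTree (T : Set G.E) : Prop := G.ConnOn T ∧ G.CycleFree T

/-- `F` is a 2-forest: `Γ|_F` is cycle-free with exactly two connected components. -/
def IsTwoForest (F : Set G.E) : Prop := G.CycleFree F ∧ Nat.card (G.Comp F) = 2

/-- `M` is a maximal forest of the subgraph `Γ|_S`: it is a cycle-free subset of `S`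
containing a spanning tree of each connected component of `Γ|_S` (equivalently,
inducing the same connected components as `S`). -/
def IsMaxForestOf (M S : Set G.E) : Prop :=
  M ⊆ S ∧ G.CycleFree M ∧ ∀ i j : G.V, G.Reach S i j ↔ G.Reach M i j

/-- The sign `σ(i,j;k,ℓ;F)` attached to a 2-forest `F`: `+1` if one component of `Γ|_F`
contains `i` and `k` and the other contains `j` and `ℓ`; `-1` if one component contains
`i` and `ℓ` and the other contains `j` and `k`; `0` otherwise. -/
noncomputable def sigma2 (F : Set G.E) (i j k l : G.V) : ℝ :=
  if ¬ G.Reach F i j ∧ G.Reach F i k ∧ G.Reach F j l then 1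
  else if ¬ G.Reach F i j ∧ G.Reach F i l ∧ G.Reach F j k then -1
  else 0

end FinGraph

namespace FinGraph

variable (G : FinGraph)

/-- An oriented edge: an edge together with an ordering of its endpoints. -/
def OEdge : Type := {x : G.E × G.V × G.V // G.ends x.1 = s(x.2.1, x.2.2)}

noncomputable instance : Fintype G.OEdge := Subtype.fintype _

namespace OEdge

variable {G}

/-- The underlying edge of an oriented edge. -/
def edge (o : G.OEdge) : G.E := o.1.1

/-- The source of an oriented edge. -/
def src (o : G.OEdge) : G.V := o.1.2.1

/-- The target of an oriented edge. -/
def tgt (o : G.OEdge) : G.V := o.1.2.2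

/-- The reversal of an oriented edge. -/
def rev (o : G.OEdge) : G.OEdge := ⟨(o.1.1, o.1.2.2, o.1.2.1), o.2.trans Sym2.eq_swap⟩

end OEdge

/-- An edge current assignment: a real-valued function on oriented edges with
`I(e : i → j) = −I(e : j → i)`. -/
def IsCurrent (I : G.OEdge → ℝ) : Prop := ∀ o : G.OEdge, I o.rev = - I o

/-- The edge current assignment `I` is consistent with the vertex current assignment `D`:
for every vertex `i`, `Σ_j Σ_{edges e : i → j} I(e : i → j) = D i`. -/
def Consistent (I : G.OEdge → ℝ) (D : G.V → ℝ) : Prop :=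
  ∀ x : G.V, (∑ o ∈ Finset.univ.filter (fun o : G.OEdge => o.src = x), I o) = D x

lemma exists_oedge (e : G.E) : ∃ o : G.OEdge, o.edge = e := by
  have h : ∀ z : Sym2 G.V, G.ends e = z → ∃ o : G.OEdge, o.edge = e := by
    refine Sym2.ind (fun a b h => ?_)
    exact ⟨⟨(e, a, b), h⟩, rfl⟩
  exact h (G.ends e) rfl

/-- A choice of orientation for each edge. -/
noncomputable def orient (e : G.E) : G.OEdge := Classical.choose (G.exists_oedge e)

lemma orient_edge (e : G.E) : (G.orient e).edge = e := Classical.choose_spec (G.exists_oedge e)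

/-- The power dissipated by an edge current assignment: `Σ_{e ∈ Ed(Γ)} μ(e) I(e)²`. -/
noncomputable def power (μ : G.E → ℝ) (I : G.OEdge → ℝ) : ℝ :=
  ∑ e : G.E, μ e * (I (G.orient e)) ^ 2

/-- The Green's function `g(Γ, μ; D, E) = Dᵀ v` for any `v` with `L v = E`
(for `Γ` connected, `μ` proper, and `D`, `E` zero-sum vectors, such a `v` exists and
`Dᵀ v` does not depend on the choice). -/
noncomputable def green (μ : G.E → ℝ) (D E : G.V → ℝ) : ℝ :=
  if h : ∃ v : G.V → ℝ, G.lap μ v = E then ∑ x : G.V, D x * Classical.choose h x else 0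

/-- The contracted graph `Γ/S`: identify the two endpoints of each edge in `S` and
delete the edges in `S`. -/
noncomputable def contract (S : Set G.E) : FinGraph :=
  letI : DecidableEq (Quotient (Relation.EqvGen.setoid (G.Adj S))) := Classical.decEq _
  letI : DecidablePred (· ∈ S) := Classical.decPred _
  { V := Quotient (Relation.EqvGen.setoid (G.Adj S))
    E := {e : G.E // e ∉ S}
    ends := fun e => (G.ends e.1).map (Quotient.mk (Relation.EqvGen.setoid (G.Adj S))) }

/-- The quotient map `[·] : Vert(Γ) → Vert(Γ/S)`. -/
noncomputable def cmk (S : Set G.E) (x : G.V) : (G.contract S).V :=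
  Quotient.mk (Relation.EqvGen.setoid (G.Adj S)) x

/-- The edge of `Γ` underlying an edge of `Γ/S` (recall `Ed(Γ/S) = Ed(Γ)∖S`). -/
noncomputable def cval (S : Set G.E) (e : (G.contract S).E) : G.E := e.1

/-- The subset of `Ed(Γ/S) = Ed(Γ)∖S` induced by a subset `F ⊆ Ed(Γ)`, namely `F∖S`. -/
noncomputable def cset (S : Set G.E) (F : Set G.E) : Set (G.contract S).E :=
  {e : (G.contract S).E | G.cval S e ∈ F}

/-- The linear map `[·] : ℝ^{Vert(Γ)} → ℝ^{Vert(Γ/S)}` sending the basis vector `e_i`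
to `e_{[i]}`. -/
noncomputable def pushVec (S : Set G.E) (D : G.V → ℝ) : (G.contract S).V → ℝ := fun x =>
  ∑ i ∈ Finset.univ.filter (fun i : G.V => G.cmk S i = x), D i

/-- Contraction of walks: delete from a walk in `Γ` the edges belonging to `S`,
obtaining a walk in `Γ/S`. -/
noncomputable def contractWalk (S : Set G.E) :
    ∀ {i j : G.V}, G.Walk i j → (G.contract S).Walk (G.cmk S i) (G.cmk S j)
  | _, _, .nil a => .nil (G.cmk S a)
  | _, _, @Walk.cons _ a b _ e he w =>
    if hS : e ∈ S then
      (contractWalk S w).copy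
        (Quotient.sound (Relation.EqvGen.rel b a ⟨e, hS, he.trans Sym2.eq_swap⟩)) rfl
    else
      Walk.cons (j := G.cmk S b) ⟨e, hS⟩
        (by show Sym2.map _ (G.ends e) = s(G.cmk S a, G.cmk S b)
            rw [he]
            exact Sym2.map_pair_eq _ a b) (contractWalk S w)

/-- The current `I_{Γ|_T}(e : i → j)` flowing along the oriented edge `e : i → j` when a
unit current from `k` to `ℓ` is imposed on the spanning tree `Γ|_T`: it is `+1` if `e ∈ T`
and the unique path in `Γ|_T` from `k` to `ℓ` traverses `e` from `i` to `j`, `−1` if it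
traverses `e` from `j` to `i`, and `0` otherwise. -/
noncomputable def treeCurrent (T : Set G.E) (k l : G.V) (e : G.E) (i j : G.V) : ℝ :=
  if e ∈ T ∧ ∃ w : G.Walk k l, w.IsPath ∧ w.In T ∧ (i, e, j) ∈ w.steps then 1
  else if e ∈ T ∧ ∃ w : G.Walk k l, w.IsPath ∧ w.In T ∧ (j, e, i) ∈ w.steps then -1
  else 0

/-- The extended Green's function on possibly improper resistances: contract the edges of
zero resistance and take the Green's function of the resulting proper network, with the
pushed-forward vertex vectors. -/
noncomputable def egreen (μ : G.E → ℝ) (D E : G.V → ℝ) : ℝ :=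
  (G.contract {e : G.E | μ e = 0}).green (fun e => μ (G.cval {e : G.E | μ e = 0} e))
    (G.pushVec {e : G.E | μ e = 0} D) (G.pushVec {e : G.E | μ e = 0} E)

end FinGraph

/-!
An edge `e = ab` of `F` lies on a cycle of `F` iff `a` and `b` are still connected by
`F ∖ {e}`. For any edge set `X`, connectivity in `Γ/S` through `X ∖ S` is connectivity in
`Γ` through `X ∪ S`, and since `F ∩ S` has the same components as `S`, through
`X ∪ (F ∩ S)`. Hence an edge of `F ∖ S` closes a cycle of `F ∖ S` in `Γ/S` iff it closes a
cycle of `F` in `Γ`. Conversely, a cycle of `F` must contain an edge outside `S`, since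
`F ∩ S` is cycle-free.
-/

namespace FinGraph

variable {G : FinGraph}

lemma exists_ends_eq (e : G.E) : ∃ a b, G.ends e = s(a, b) :=
  Sym2.exists.1 ⟨_, rfl⟩

section Reach

variable {X Y : Set G.E} {a b c : G.V}

protected lemma Reach.refl : G.Reach X a a := Relation.EqvGen.refl a

lemma Reach.symm (h : G.Reach X a b) : G.Reach X b a :=
  Relation.EqvGen.symm _ _ h

lemma Reach.trans (h₁ : G.Reach X a b) (h₂ : G.Reach X b c) : G.Reach X a c :=
  Relation.EqvGen.trans _ _ _ h₁ h₂

lemma reach_of_ends {e : G.E} (he : e ∈ X) (hab : G.ends e = s(a, b)) : G.Reach X a b :=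
  .rel _ _ ⟨e, he, hab⟩

lemma Reach.mono (hXY : X ⊆ Y) (h : G.Reach X a b) : G.Reach Y a b :=
  Relation.EqvGen.mono (fun _ _ ⟨e, he, hends⟩ => ⟨e, hXY he, hends⟩) _ _ h

lemma reach_union_of_le (hY : ∀ a b, G.Reach Y a b → G.Reach X a b)
    (h : G.Reach (X ∪ Y) a b) : G.Reach X a b := by
  refine Relation.EqvGen.eqvGen_le (r' := Relation.EqvGen (G.Adj X)) ?_ _ _ h
  rintro x y ⟨e, he | he, hends⟩
  · exact reach_of_ends he hends
  · exact hY x y (reach_of_ends he hends)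

end Reach

namespace Walk

lemma start_mem_vertices {i j : G.V} : ∀ w : G.Walk i j, i ∈ w.vertices
  | .nil _ => List.mem_singleton_self _
  | .cons _ _ _ => List.mem_cons_self ..

lemma vertices_ne_nil {i j : G.V} (w : G.Walk i j) : w.vertices ≠ [] :=
  List.ne_nil_of_mem w.start_mem_vertices

lemma vertices_eq_dropLast_append : ∀ {i j : G.V} (w : G.Walk i j),
    w.vertices = w.vertices.dropLast ++ [j]
  | _, _, .nil _ => rfl
  | _, _, .cons _ _ w => by
    rw [vertices, List.dropLast_cons_of_ne_nil w.vertices_ne_nil, List.cons_append,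
      ← vertices_eq_dropLast_append w]

lemma mem_vertices_of_mem_edges : ∀ {i j : G.V} (w : G.Walk i j) {e : G.E} {a b : G.V},
    e ∈ w.edges → G.ends e = s(a, b) → a ∈ w.vertices
  | _, _, .nil _, _, _, _, he, _ => absurd he List.not_mem_nil
  | _, _, .cons f hf w, e, a, b, he, hab => by
    rcases List.mem_cons.1 he with rfl | he
    · rcases Sym2.eq_iff.1 (hab.symm.trans hf) with ⟨rfl, -⟩ | ⟨rfl, -⟩
      · exact List.mem_cons_self ..
      · exact List.mem_cons_of_mem _ w.start_mem_vertices
    · exact List.mem_cons_of_mem _ (mem_vertices_of_mem_edges w he hab)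

lemma edges_nodup_of_vertices_nodup : ∀ {i j : G.V} (w : G.Walk i j),
    w.vertices.Nodup → w.edges.Nodup
  | _, _, .nil _, _ => List.nodup_nil
  | _, _, .cons e he w, h => by
    obtain ⟨hi, hw⟩ := List.nodup_cons.1 h
    exact List.nodup_cons.2
      ⟨fun hew => hi (w.mem_vertices_of_mem_edges hew he), edges_nodup_of_vertices_nodup w hw⟩

lemma exists_suffix_of_mem_vertices : ∀ {i j : G.V} (w : G.Walk i j) {x : G.V},
    x ∈ w.vertices → ∃ q : G.Walk x j, q.vertices <:+ w.vertices ∧ q.edges <:+ w.edges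
  | _, _, .nil _, _, hx => by
    obtain rfl := List.mem_singleton.1 hx
    exact ⟨.nil _, List.suffix_refl _, List.suffix_refl _⟩
  | i, _, .cons e he w, x, hx => by
    by_cases hxi : x = i
    · subst hxi
      exact ⟨.cons e he w, List.suffix_refl _, List.suffix_refl _⟩
    obtain ⟨q, hqv, hqe⟩ :=
      exists_suffix_of_mem_vertices w ((List.mem_cons.1 hx).resolve_left hxi)
    exact ⟨q, hqv.trans (List.suffix_cons _ _), hqe.trans (List.suffix_cons _ _)⟩

lemma reach {i j : G.V} {F : Set G.E} : ∀ w : G.Walk i j, w.In F → G.Reach F i j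
  | .nil _, _ => Reach.refl
  | .cons e he w, hw =>
    (reach_of_ends (hw e (List.mem_cons_self ..)) he).trans
      (w.reach fun f hf => hw f (List.mem_cons_of_mem _ hf))

lemma exists_reach_of_mem_edges : ∀ {i j : G.V} (w : G.Walk i j) {F : Set G.E} {e : G.E},
    w.In F → w.edges.Nodup → e ∈ w.edges →
    ∃ a b, G.ends e = s(a, b) ∧ G.Reach (F \ {e}) i a ∧ G.Reach (F \ {e}) b j
  | _, _, .nil _, _, _, _, _, he => absurd he List.not_mem_nil
  | i, _, @Walk.cons _ _ m _ f hf w, F, e, hw, hnd, he => by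
    obtain ⟨hfw, hnd⟩ := List.nodup_cons.1 hnd
    have hwF : w.In F := fun g hg => hw g (List.mem_cons_of_mem _ hg)
    rcases List.mem_cons.1 he with rfl | he
    · refine ⟨i, m, hf, Reach.refl, w.reach fun g hg => Set.mem_sdiff_of_mem (hwF g hg) ?_⟩
      rintro rfl
      exact hfw hg
    · obtain ⟨a, b, hab, hma, hbj⟩ := exists_reach_of_mem_edges w hwF hnd he
      have hf' : f ∈ F \ {e} :=
        Set.mem_sdiff_of_mem (hw f (List.mem_cons_self ..)) fun hfe => hfw (hfe ▸ he)
      exact ⟨a, b, hab, (reach_of_ends hf' hf).trans hma, hbj⟩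

lemma reach_of_mem_edges_of_isPath {i : G.V} (w : G.Walk i i) {F : Set G.E} {e : G.E}
    {a b : G.V} (hw : w.In F) (hp : w.IsPath) (he : e ∈ w.edges) (hab : G.ends e = s(a, b)) :
    G.Reach (F \ {e}) a b := by
  obtain ⟨a', b', hab', hia, hbi⟩ := w.exists_reach_of_mem_edges hw hp.2.2 he
  rcases Sym2.eq_iff.1 (hab.symm.trans hab') with ⟨rfl, rfl⟩ | ⟨rfl, rfl⟩
  · exact (hbi.trans hia).symm
  · exact hbi.trans hia

lemma isPath_cons {a b : G.V} {e : G.E} (he : G.ends e = s(a, b)) (p : G.Walk b a)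
    (hp : p.vertices.Nodup) (hep : e ∉ p.edges) : (Walk.cons e he p).IsPath := by
  have ha : a ∉ p.vertices.dropLast := by
    have := p.vertices_eq_dropLast_append ▸ hp
    exact fun h => List.disjoint_of_nodup_append this h (List.mem_singleton_self a)
  refine ⟨?_, hp, List.nodup_cons.2 ⟨hep, p.edges_nodup_of_vertices_nodup hp⟩⟩
  change (a :: p.vertices).dropLast.Nodup
  rw [List.dropLast_cons_of_ne_nil p.vertices_ne_nil]
  exact List.nodup_cons.2 ⟨ha, hp.sublist (List.dropLast_sublist _)⟩

end Walk

lemma Reach.exists_walk_vertices_nodup {F : Set G.E} {i j : G.V} (h : G.Reach F i j) :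
    ∃ p : G.Walk i j, p.In F ∧ p.vertices.Nodup := by
  have : Std.Symm (G.Adj F) :=
    ⟨fun _ _ ⟨e, he, hends⟩ => ⟨e, he, hends.trans Sym2.eq_swap⟩⟩
  rw [Reach, Relation.EqvGen.eqvGen_eq_reflTransGen] at h
  induction h using Relation.ReflTransGen.head_induction_on with
  | refl => exact ⟨.nil j, fun _ he => absurd he List.not_mem_nil, List.nodup_singleton j⟩
  | @head i m hadj _ ih =>
    obtain ⟨p, hpF, hp⟩ := ih
    by_cases hi : i ∈ p.vertices
    · obtain ⟨q, hqv, hqe⟩ := p.exists_suffix_of_mem_vertices hi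
      exact ⟨q, fun f hf => hpF f (hqe.subset hf), hp.sublist hqv.sublist⟩
    · obtain ⟨e, he, hends⟩ := hadj
      refine ⟨.cons e hends p, fun f hf => ?_, List.nodup_cons.2 ⟨hi, hp⟩⟩
      rcases List.mem_cons.1 hf with rfl | hf
      exacts [he, hpF f hf]

lemma not_cycleFree_of_reach {F : Set G.E} {e : G.E} {a b : G.V} (he : e ∈ F)
    (hab : G.ends e = s(a, b)) (h : G.Reach (F \ {e}) a b) : ¬ G.CycleFree F := by
  intro hF
  obtain ⟨p, hpF, hp⟩ := h.symm.exists_walk_vertices_nodup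
  have hcycle : (Walk.cons e hab p).In F := fun f hf => by
    rcases List.mem_cons.1 hf with rfl | hf
    exacts [he, (hpF f hf).1]
  have hep : e ∉ p.edges := fun hep => (hpF e hep).2 rfl
  exact List.cons_ne_nil _ _ (hF a _ hcycle (Walk.isPath_cons hab p hp hep))

section Contract

variable {S X : Set G.E} {a b : G.V}

lemma cmk_eq_cmk_iff : G.cmk S a = G.cmk S b ↔ G.Reach S a b := Quotient.eq

lemma contract_ends_mk {e : G.E} (heS : e ∉ S) (hab : G.ends e = s(a, b)) :
    (G.contract S).ends ⟨e, heS⟩ = s(G.cmk S a, G.cmk S b) :=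
  (congrArg (Sym2.map _) hab).trans (Sym2.map_mk _ a b)

lemma cset_diff_singleton (ε : (G.contract S).E) :
    G.cset S (X \ {ε.1}) = G.cset S X \ {ε} := by
  ext δ
  change δ.1 ∈ X ∧ δ.1 ≠ ε.1 ↔ δ.1 ∈ X ∧ δ ≠ ε
  exact and_congr_right fun _ => Subtype.val_injective.ne_iff

lemma Reach.contract (h : G.Reach X a b) :
    (G.contract S).Reach (G.cset S X) (G.cmk S a) (G.cmk S b) := by
  induction h with
  | rel x y hxy =>
    obtain ⟨e, he, hends⟩ := hxy
    by_cases heS : e ∈ S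
    · rw [cmk_eq_cmk_iff.2 (reach_of_ends heS hends)]
      exact Reach.refl
    · exact reach_of_ends (show ⟨e, heS⟩ ∈ G.cset S X from he) (contract_ends_mk heS hends)
  | refl => exact Reach.refl
  | symm _ _ _ ih => exact ih.symm
  | trans _ _ _ _ _ ih₁ ih₂ => exact ih₁.trans ih₂

lemma reach_union_of_reach_contract
    (h : (G.contract S).Reach (G.cset S X) (G.cmk S a) (G.cmk S b)) : G.Reach (X ∪ S) a b := by
  have hS : ∀ {x y : G.V}, G.cmk S x = G.cmk S y → G.Reach (X ∪ S) x y := fun hxy =>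
    (cmk_eq_cmk_iff.1 hxy).mono Set.subset_union_right
  suffices ∀ A B, (G.contract S).Reach (G.cset S X) A B →
      ∀ a b, G.cmk S a = A → G.cmk S b = B → G.Reach (X ∪ S) a b from this _ _ h a b rfl rfl
  intro A B hAB
  induction hAB with
  | rel A B hAB =>
    rintro a b rfl rfl
    obtain ⟨ε, hε, hends⟩ := hAB
    obtain ⟨p, q, hpq⟩ := G.exists_ends_eq ε.1
    have hpqX : G.Reach (X ∪ S) p q := reach_of_ends (Or.inl hε) hpq
    rcases Sym2.eq_iff.1 ((contract_ends_mk ε.2 hpq).symm.trans hends) with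
      ⟨hp, hq⟩ | ⟨hq, hp⟩
    · exact ((hS hp.symm).trans hpqX).trans (hS hq)
    · exact ((hS hp.symm).trans hpqX.symm).trans (hS hq)
  | refl =>
    rintro a b rfl hb
    exact hS hb.symm
  | symm _ _ _ ih => exact fun a b ha hb => (ih b a hb ha).symm
  | trans A B C _ _ ih₁ ih₂ =>
    rintro a c ha hc
    obtain ⟨b, rfl⟩ := Quotient.exists_rep B
    exact (ih₁ a b ha rfl).trans (ih₂ b c rfl hc)

end Contract

end FinGraph

theorem stmt10 (G : FinGraph) (S F : Set G.E) (hF : G.IsMaxForestOf (F ∩ S) S) :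
    G.CycleFree F ↔ (G.contract S).CycleFree (G.cset S F) := by
  open FinGraph in
  obtain ⟨-, hFS, hreach⟩ := hF
  constructor
  · intro hCF x w hwF hw
    by_contra hne
    obtain ⟨ε, hε⟩ := List.exists_mem_of_ne_nil _ hne
    obtain ⟨a, b, hab⟩ := G.exists_ends_eq ε.1
    have hS : ∀ a b, G.Reach S a b → G.Reach (F \ {ε.1}) a b := fun a b h =>
      ((hreach a b).1 h).mono fun f hf => ⟨hf.1, fun hfε => ε.2 (hfε ▸ hf.2)⟩
    have hcut := w.reach_of_mem_edges_of_isPath hwF hw hε (contract_ends_mk ε.2 hab)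
    rw [← cset_diff_singleton] at hcut
    exact not_cycleFree_of_reach (show ε.1 ∈ F from hwF ε hε) hab
      (reach_union_of_le hS (reach_union_of_reach_contract hcut)) hCF
  · intro hCF i w hwF hw
    by_contra hne
    obtain ⟨e, he, heS⟩ : ∃ e ∈ w.edges, e ∉ S := by
      by_contra! hS
      exact hne (hFS i w (fun e he => ⟨hwF e he, hS e he⟩) hw)
    obtain ⟨a, b, hab⟩ := G.exists_ends_eq e
    have hcut := (w.reach_of_mem_edges_of_isPath hwF hw he hab).contract (S := S)
    rw [cset_diff_singleton ⟨e, heS⟩] at hcut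
    exact not_cycleFree_of_reach (show ⟨e, heS⟩ ∈ G.cset S F from hwF e he)
      (contract_ends_mk heS hab) hcut hCF
end

section
/- Let Γ be a connected graph, let D, E ∈ ℝ^{Vert(Γ)} be zero-sum vectors, and let μ₀ ∈ ℝ_{≥0}^{Ed(Γ)}. Let S ⊆ Ed(Γ) be the set of edges e with μ₀(e) = 0. Then the limit of g(Γ, μ; D, E) as μ → μ₀ through proper resistances μ ∈ ℝ_{>0}^{Ed(Γ)} exists and equals g(Γ/S, μ₀|_{Ed(Γ)∖S}; [D], [E]), the Green's function of the contracted graph Γ/S with the restricted resistance and the pushed-forward vectors [D], [E]. -/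
/-!
Let `w` solve the contracted problem `L̄ w = [E]` and lift it to `u = w ∘ [·]`, so that `Dᵀu` is
the contracted Green's function. For proper `μ`, `g(Γ, μ; D, E) - Dᵀu = Dᵀc` with
`L_μ c = E - L_μ u`. Since `[E - L_{μ₀} u] = 0`, `E` is the divergence of a current `J` that equals
`∇u / μ₀` off `S` and lives inside the components of `S` otherwise; hence `E - L_μ u` is the
divergence of `J - ∇u / μ`, and Thomson's principle bounds the energy of `c` by
`Σ μ (J - ∇u / μ)²`, which tends to `0` as `μ → μ₀`. Cauchy–Schwarz against a current with
divergence `D` then bounds `(Dᵀc)²` by this energy times a bounded factor.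
-/

open Classical
open scoped BigOperators

namespace ResGraph

variable (G : ResGraph)

noncomputable def grad (v : G.V → ℝ) (e : G.E) : ℝ :=
  v (G.orient e).src - v (G.orient e).tgt

noncomputable def divergence (φ : G.E → ℝ) (i : G.V) : ℝ :=
  ∑ e, ((if (G.orient e).src = i then φ e else 0) - if (G.orient e).tgt = i then φ e else 0)

noncomputable def lapL (μ : G.E → ℝ) : (G.V → ℝ) →ₗ[ℝ] (G.V → ℝ) where
  toFun := G.lap μ
  map_add' v w := by
    funext i
    simp only [lap, Pi.add_apply, ← Finset.sum_add_distrib]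
    refine Finset.sum_congr rfl fun j _ => Finset.sum_congr rfl fun e _ => ?_
    split_ifs <;> ring
  map_smul' c v := by
    funext i
    simp only [lap, Pi.smul_apply, smul_eq_mul, Finset.mul_sum, RingHom.id_apply]
    refine Finset.sum_congr rfl fun j _ => Finset.sum_congr rfl fun e _ => ?_
    split_ifs <;> ring

noncomputable def pushVecL (F : Set G.E) : (G.V → ℝ) →ₗ[ℝ] ((G.contract F).V → ℝ) where
  toFun := G.pushVec F
  map_add' v w := by
    funext x
    simp [pushVec, Finset.sum_add_distrib]
  map_smul' c v := by
    funext x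
    simp [pushVec, Finset.mul_sum]

variable {G}

@[simp] lemma lapL_apply (μ : G.E → ℝ) (v : G.V → ℝ) : G.lapL μ v = G.lap μ v := rfl

@[simp] lemma pushVecL_apply (F : Set G.E) (r : G.V → ℝ) : G.pushVecL F r = G.pushVec F r := rfl

lemma ends_orient (e : G.E) : G.ends e = s((G.orient e).src, (G.orient e).tgt) := by
  conv_lhs => rw [← G.orient_edge e]
  exact (G.orient e).2

lemma grad_mul_grad_of_ends_eq {e : G.E} {a b : G.V} (he : G.ends e = s(a, b))
    (z v : G.V → ℝ) : G.grad z e * G.grad v e = (z a - z b) * (v a - v b) := by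
  rcases Sym2.eq_iff.mp ((G.ends_orient e).symm.trans he) with ⟨ha, hb⟩ | ⟨ha, hb⟩ <;>
    simp only [grad, ha, hb]; ring

lemma sum_mul_divergence (z : G.V → ℝ) (φ : G.E → ℝ) :
    ∑ i, z i * G.divergence φ i = ∑ e, G.grad z e * φ e := by
  simp only [divergence, Finset.mul_sum]
  rw [Finset.sum_comm]
  refine Finset.sum_congr rfl fun e _ => ?_
  simp [mul_sub, grad, Finset.sum_sub_distrib, sub_mul]

lemma sum_divergence (φ : G.E → ℝ) : ∑ i, G.divergence φ i = 0 := by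
  simpa [grad] using sum_mul_divergence (fun _ => 1) φ

lemma divergence_add (φ ψ : G.E → ℝ) :
    G.divergence (φ + ψ) = G.divergence φ + G.divergence ψ := by
  funext i
  simp only [divergence, Pi.add_apply, ← Finset.sum_add_distrib]
  refine Finset.sum_congr rfl fun e _ => ?_
  split_ifs <;> ring

lemma divergence_sub (φ ψ : G.E → ℝ) :
    G.divergence (φ - ψ) = G.divergence φ - G.divergence ψ := by
  funext i
  simp only [divergence, Pi.sub_apply, ← Finset.sum_sub_distrib]
  refine Finset.sum_congr rfl fun e _ => ?_
  split_ifs <;> ring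

lemma lap_eq_divergence (μ : G.E → ℝ) (v : G.V → ℝ) :
    G.lap μ v = G.divergence (fun e => G.grad v e / μ e) := by
  funext i
  rw [lap, divergence, Finset.sum_comm]
  refine Finset.sum_congr rfl fun e _ => ?_
  rw [G.ends_orient e, grad]
  generalize (G.orient e).src = a
  generalize (G.orient e).tgt = b
  by_cases ha : a = i <;> by_cases hb : b = i
  · subst ha hb
    simp
  · subst ha
    simp [hb]
  · subst hb
    simp [ha]
    ring
  · simp [ha, hb]

lemma sum_mul_lap (μ : G.E → ℝ) (z v : G.V → ℝ) :
    ∑ i, z i * G.lap μ v i = ∑ e, G.grad z e * (G.grad v e / μ e) := by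
  rw [lap_eq_divergence, sum_mul_divergence]

lemma sum_mul_lap_comm (μ : G.E → ℝ) (z v : G.V → ℝ) :
    ∑ i, z i * G.lap μ v i = ∑ i, v i * G.lap μ z i := by
  simp only [sum_mul_lap]
  exact Finset.sum_congr rfl fun e _ => by ring

lemma eq_of_reach {F : Set G.E} {v : G.V → ℝ} (hv : ∀ e ∈ F, G.grad v e = 0) {i j : G.V}
    (h : G.Reach F i j) : v i = v j := by
  induction h with
  | rel a b hab =>
    obtain ⟨e, heF, he⟩ := hab
    have h := G.grad_mul_grad_of_ends_eq he v v
    rw [hv e heF, zero_mul, eq_comm, mul_self_eq_zero] at h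
    exact sub_eq_zero.mp h
  | refl a => rfl
  | symm a b _ ih => exact ih.symm
  | trans a b c _ _ ih1 ih2 => exact ih1.trans ih2

lemma cmk_eq_of_adj {F : Set G.E} {i j : G.V} (h : G.Adj F i j) : G.cmk F i = G.cmk F j :=
  Quotient.sound (Relation.EqvGen.rel _ _ h)

lemma cmk_src_eq_cmk_tgt {F : Set G.E} {e : G.E} (he : e ∈ F) :
    G.cmk F (G.orient e).src = G.cmk F (G.orient e).tgt :=
  cmk_eq_of_adj ⟨e, he, G.ends_orient e⟩

lemma grad_comp_cmk_of_mem {F : Set G.E} (w : (G.contract F).V → ℝ) {e : G.E} (he : e ∈ F) :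
    G.grad (fun i => w (G.cmk F i)) e = 0 := by
  simp only [grad, cmk_src_eq_cmk_tgt he, sub_self]

lemma lap_comp_cmk_eq_zero {μ : G.E → ℝ} {F : Set G.E} (hF : ∀ e, μ e ≠ 0 → e ∈ F)
    (w : (G.contract F).V → ℝ) : G.lap μ (fun i => w (G.cmk F i)) = 0 := by
  have hcurrent : (fun e => G.grad (fun i => w (G.cmk F i)) e / μ e) = 0 := by
    funext e
    by_cases h : μ e = 0
    · simp [h]
    · simp [grad_comp_cmk_of_mem w (hF e h)]
  rw [lap_eq_divergence, hcurrent]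
  funext i
  simp [divergence]

lemma ker_lapL {μ : G.E → ℝ} (hμ : ∀ e, 0 ≤ μ e) {F : Set G.E} (hF : ∀ e, μ e ≠ 0 ↔ e ∈ F) :
    LinearMap.ker (G.lapL μ) = LinearMap.range (LinearMap.funLeft ℝ ℝ (G.cmk F)) := by
  ext v
  simp only [LinearMap.mem_ker, LinearMap.mem_range, lapL_apply]
  constructor
  · intro hv
    have henergy : ∑ e, G.grad v e ^ 2 / μ e = 0 := by
      have h := G.sum_mul_lap μ v v
      simp only [hv, Pi.zero_apply, mul_zero, Finset.sum_const_zero] at h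
      simp only [h, sq, mul_div_assoc]
    have hgrad : ∀ e ∈ F, G.grad v e = 0 := fun e he => by
      have h := (Finset.sum_eq_zero_iff_of_nonneg fun e _ =>
        div_nonneg (sq_nonneg _) (hμ e)).mp henergy e (Finset.mem_univ e)
      simpa [(hF e).mpr he] using h
    exact ⟨Quotient.lift v fun i j h => eq_of_reach hgrad h, rfl⟩
  · rintro ⟨w, rfl⟩
    exact lap_comp_cmk_eq_zero (fun e => (hF e).mp) w

lemma pushVec_apply (F : Set G.E) (r : G.V → ℝ) (x : (G.contract F).V) :
    G.pushVec F r x = ∑ i, (if G.cmk F i = x then 1 else 0) * r i := by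
  simp [pushVec, Finset.sum_filter]

lemma sum_pushVec_mul (F : Set G.E) (r : G.V → ℝ) (z : (G.contract F).V → ℝ) :
    ∑ x, G.pushVec F r x * z x = ∑ i, r i * z (G.cmk F i) := by
  simp only [pushVec_apply, Finset.sum_mul]
  rw [Finset.sum_comm]
  simp

lemma sum_pushVec (F : Set G.E) (r : G.V → ℝ) : ∑ x, G.pushVec F r x = ∑ i, r i := by
  simpa using G.sum_pushVec_mul F r 1

lemma pushVec_lap_eq_zero {μ : G.E → ℝ} {F : Set G.E} (hF : ∀ e, μ e ≠ 0 → e ∈ F)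
    (v : G.V → ℝ) : G.pushVec F (G.lap μ v) = 0 := by
  funext x
  rw [pushVec_apply, sum_mul_lap_comm, lap_comp_cmk_eq_zero hF (fun y => if y = x then 1 else 0)]
  simp

lemma pushVec_surjective (F : Set G.E) : Function.Surjective (G.pushVecL F) := by
  intro f
  let out : (G.contract F).V → G.V := Quotient.out (s := Relation.EqvGen.setoid (G.Adj F))
  have hout : ∀ x, G.cmk F (out x) = x := Quotient.out_eq
  refine ⟨fun i => if i = out (G.cmk F i) then f (G.cmk F i) else 0, funext fun x => ?_⟩
  rw [pushVecL_apply, pushVec_apply, Finset.sum_eq_single (out x)]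
  · simp [hout]
  · rintro i - hi
    by_cases hix : G.cmk F i = x
    · subst hix
      simp [hi]
    · simp [hix]
  · simp

lemma cmk_surjective (F : Set G.E) : Function.Surjective (G.cmk F) :=
  Quotient.mk_surjective

lemma range_lapL {μ : G.E → ℝ} (hμ : ∀ e, 0 ≤ μ e) {F : Set G.E} (hF : ∀ e, μ e ≠ 0 ↔ e ∈ F) :
    LinearMap.range (G.lapL μ) = LinearMap.ker (G.pushVecL F) := by
  refine Submodule.eq_of_le_of_finrank_eq ?_ ?_
  · rintro _ ⟨v, rfl⟩
    exact pushVec_lap_eq_zero (fun e => (hF e).mp) v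
  · have hL := LinearMap.finrank_range_add_finrank_ker (G.lapL μ)
    have hP := LinearMap.finrank_range_add_finrank_ker (G.pushVecL F)
    rw [ker_lapL hμ hF, LinearMap.finrank_range_of_inj
      (LinearMap.funLeft_injective_of_surjective ℝ ℝ _ (cmk_surjective F))] at hL
    rw [LinearMap.range_eq_top.mpr (pushVec_surjective F), finrank_top] at hP
    omega

lemma exists_lap_eq_of_pushVec_eq_zero {μ : G.E → ℝ} (hμ : ∀ e, 0 ≤ μ e) {F : Set G.E}
    (hF : ∀ e, μ e ≠ 0 ↔ e ∈ F) {r : G.V → ℝ} (hr : G.pushVec F r = 0) :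
    ∃ v, G.lap μ v = r := by
  have hr' : r ∈ LinearMap.range (G.lapL μ) := by
    rw [range_lapL hμ hF]
    exact hr
  obtain ⟨v, hv⟩ := hr'
  exact ⟨v, hv⟩

lemma pushVec_univ_apply (hG : G.Connected) (r : G.V → ℝ) (x : (G.contract Set.univ).V) :
    G.pushVec Set.univ r x = ∑ i, r i := by
  obtain ⟨j, rfl⟩ := cmk_surjective Set.univ x
  rw [pushVec, Finset.filter_true_of_mem]
  exact fun i _ => Quotient.sound (hG i j)

lemma exists_lap_eq_of_sum_eq_zero (hG : G.Connected) {μ : G.E → ℝ} (hμ : ∀ e, 0 < μ e)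
    {r : G.V → ℝ} (hr : ∑ i, r i = 0) : ∃ v, G.lap μ v = r :=
  exists_lap_eq_of_pushVec_eq_zero (fun e => (hμ e).le) (F := Set.univ)
    (fun e => iff_of_true (hμ e).ne' trivial) (funext fun x => by rw [pushVec_univ_apply hG, hr]; rfl)

lemma green_eq_of_lap_eq (hG : G.Connected) {μ : G.E → ℝ} (hμ : ∀ e, 0 < μ e)
    {D E v : G.V → ℝ} (hD : ∑ i, D i = 0) (hv : G.lap μ v = E) :
    G.green μ D E = ∑ i, D i * v i := by
  have hex : ∃ v, G.lap μ v = E := ⟨v, hv⟩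
  rw [green, dif_pos hex]
  have hker : Classical.choose hex - v ∈ LinearMap.ker (G.lapL μ) := by
    rw [LinearMap.mem_ker, map_sub]
    simp [Classical.choose_spec hex, hv]
  rw [ker_lapL (fun e => (hμ e).le) (F := Set.univ) (fun e => iff_of_true (hμ e).ne' trivial)]
    at hker
  obtain ⟨w, hw⟩ := hker
  have hDw : ∑ i, D i * (Classical.choose hex - v) i = 0 := by
    rw [← hw]
    simp only [LinearMap.funLeft_apply]
    rw [← sum_pushVec_mul]
    simp [pushVec_univ_apply hG, hD]
  simp only [Pi.sub_apply, mul_sub, Finset.sum_sub_distrib] at hDw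
  linarith

lemma exists_divergence_eq_of_pushVec_eq_zero (F : Set G.E) {r : G.V → ℝ}
    (hr : G.pushVec F r = 0) : ∃ φ : G.E → ℝ, (∀ e ∉ F, φ e = 0) ∧ G.divergence φ = r := by
  obtain ⟨p, hp⟩ := exists_lap_eq_of_pushVec_eq_zero (μ := F.indicator 1)
    (fun e => Set.indicator_nonneg (fun _ _ => zero_le_one) e) (by simp) hr
  refine ⟨fun e => G.grad p e / F.indicator 1 e, fun e he => by simp [he], ?_⟩
  rw [← hp, lap_eq_divergence]

lemma contract_connected (hG : G.Connected) (S : Set G.E) : (G.contract S).Connected := by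
  have hreach : ∀ i j : G.V, G.Reach Set.univ i j →
      (G.contract S).Reach Set.univ (G.cmk S i) (G.cmk S j) := by
    intro i j h
    induction h with
    | rel a b hab =>
      obtain ⟨e, -, he⟩ := hab
      by_cases hS : e ∈ S
      · rw [cmk_eq_of_adj ⟨e, hS, he⟩]
        exact Relation.EqvGen.refl _
      · refine Relation.EqvGen.rel _ _ ⟨⟨e, hS⟩, Set.mem_univ _, ?_⟩
        show (G.ends e).map _ = _
        rw [he, Sym2.map_mk]
        rfl
    | refl a => exact Relation.EqvGen.refl _
    | symm a b _ ih => exact Relation.EqvGen.symm _ _ ih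
    | trans a b c _ _ ih1 ih2 => exact Relation.EqvGen.trans _ _ _ ih1 ih2
  intro x y
  obtain ⟨i, rfl⟩ := cmk_surjective S x
  obtain ⟨j, rfl⟩ := cmk_surjective S y
  exact hreach i j (hG i j)

lemma sum_contract_edges (S : Set G.E) {f : G.E → ℝ} (hf : ∀ e ∈ S, f e = 0) :
    ∑ e : (G.contract S).E, f (G.cval S e) = ∑ e, f e := by
  have h := Fintype.sum_subtype_add_sum_subtype (fun e => e ∉ S) f
  rw [Fintype.sum_eq_zero (fun e : {e // ¬ e ∉ S} => f e) (fun e => hf e (not_not.mp e.2)),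
    add_zero] at h
  rw [← h]
  rfl

lemma pushVec_lap_comp_cmk (S : Set G.E) (μ : G.E → ℝ) (w : (G.contract S).V → ℝ) :
    G.pushVec S (G.lap μ (fun i => w (G.cmk S i)))
      = (G.contract S).lap (fun e => μ (G.cval S e)) w := by
  funext x
  set δ : (G.contract S).V → ℝ := fun y => if y = x then 1 else 0
  have hδ : (G.contract S).lap (fun e => μ (G.cval S e)) w x
      = ∑ y, δ y * (G.contract S).lap (fun e => μ (G.cval S e)) w y := by
    simp [δ]
  rw [hδ, pushVec_apply, sum_mul_lap, sum_mul_lap, ← sum_contract_edges S]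
  · refine Finset.sum_congr rfl fun e _ => ?_
    have he : (G.contract S).ends e
        = s(G.cmk S (G.orient (G.cval S e)).src, G.cmk S (G.orient (G.cval S e)).tgt) := by
      show (G.ends e.1).map _ = _
      rw [G.ends_orient, Sym2.map_mk]
      rfl
    rw [← mul_div_assoc, ← mul_div_assoc, grad_mul_grad_of_ends_eq he]
    rfl
  · intro e he
    rw [grad_comp_cmk_of_mem _ he, zero_div, mul_zero]

end ResGraph

open Filter Topology

lemma sq_sum_mul_le_sum_sq_div_mul_sum_mul_sq {ι : Type*} [Fintype ι] {μ : ι → ℝ}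
    (hμ : ∀ i, 0 < μ i) (a b : ι → ℝ) :
    (∑ i, a i * b i) ^ 2 ≤ (∑ i, a i ^ 2 / μ i) * ∑ i, μ i * b i ^ 2 := by
  have hμ' : ∀ i, 0 ≤ μ i := fun i => (hμ i).le
  have hcancel : ∀ i, a i / √(μ i) * (√(μ i) * b i) = a i * b i := fun i => by
    field_simp [(Real.sqrt_pos.mpr (hμ i)).ne']
  simpa [hcancel, div_pow, mul_pow, Real.sq_sqrt, hμ'] using
    Finset.sum_mul_sq_le_sq_mul_sq Finset.univ (fun i => a i / √(μ i)) (fun i => √(μ i) * b i)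

lemma tendsto_sum_mul_sub_div_sq {ι : Type*} [Fintype ι] {μ₀ a b : ι → ℝ}
    (hb : ∀ i, μ₀ i = 0 → b i = 0) (ha : ∀ i, μ₀ i ≠ 0 → a i = b i / μ₀ i) :
    Tendsto (fun μ : ι → ℝ => ∑ i, μ i * (a i - b i / μ i) ^ 2) (𝓝 μ₀) (𝓝 0) := by
  rw [← Finset.sum_const_zero (s := (Finset.univ : Finset ι))]
  refine tendsto_finsetSum _ fun i _ => ?_
  have hμi : Tendsto (fun μ : ι → ℝ => μ i) (𝓝 μ₀) (𝓝 (μ₀ i)) := (continuous_apply i).tendsto μ₀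
  by_cases h : μ₀ i = 0
  · simpa [hb i h, h] using hμi.mul_const (a i ^ 2)
  · have hlim := hμi.mul (((tendsto_const_nhds (x := a i)).sub
      ((tendsto_const_nhds (x := b i)).div hμi h)).pow 2)
    simpa [ha i h] using hlim

lemma tendsto_of_sq_sub_le {α : Type*} {l : Filter α} {f h : α → ℝ} {a : ℝ}
    (hh : Tendsto h l (𝓝 0)) (hf : ∀ᶠ x in l, (f x - a) ^ 2 ≤ h x) : Tendsto f l (𝓝 a) := by
  rw [tendsto_iff_norm_sub_tendsto_zero]
  refine squeeze_zero_norm' (hf.mono fun x hx => ?_)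
    (by simpa using (Real.continuous_sqrt.tendsto 0).comp hh)
  rw [norm_norm, Real.norm_eq_abs]
  exact Real.abs_le_sqrt hx

namespace ResGraph

variable {G : ResGraph}

lemma energy_le_of_lap_eq_divergence {μ : G.E → ℝ} (hμ : ∀ e, 0 < μ e) {c : G.V → ℝ}
    {φ : G.E → ℝ} (h : G.lap μ c = G.divergence φ) :
    ∑ e, G.grad c e ^ 2 / μ e ≤ ∑ e, μ e * φ e ^ 2 := by
  have hQ : ∑ e, G.grad c e ^ 2 / μ e = ∑ e, G.grad c e * φ e := by
    rw [← sum_mul_divergence, ← h, sum_mul_lap]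
    exact Finset.sum_congr rfl fun e _ => by ring
  have hQ0 : 0 ≤ ∑ e, G.grad c e ^ 2 / μ e :=
    Finset.sum_nonneg fun e _ => div_nonneg (sq_nonneg _) (hμ e).le
  have hε0 : 0 ≤ ∑ e, μ e * φ e ^ 2 :=
    Finset.sum_nonneg fun e _ => mul_nonneg (hμ e).le (sq_nonneg _)
  have hcs := sq_sum_mul_le_sum_sq_div_mul_sum_mul_sq hμ (G.grad c) φ
  rw [← hQ] at hcs
  nlinarith

lemma sq_green_sub_le (hG : G.Connected) {μ : G.E → ℝ} (hμ : ∀ e, 0 < μ e)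
    {D E u : G.V → ℝ} (hD : ∑ i, D i = 0) {φ ψ : G.E → ℝ} (hψ : G.divergence ψ = D)
    (hφ : G.divergence φ = E - G.lap μ u) :
    (G.green μ D E - ∑ i, D i * u i) ^ 2 ≤ (∑ e, μ e * φ e ^ 2) * ∑ e, μ e * ψ e ^ 2 := by
  obtain ⟨c, hc⟩ : ∃ c, G.lap μ c = E - G.lap μ u :=
    exists_lap_eq_of_sum_eq_zero hG hμ (hφ ▸ sum_divergence φ)
  have hgreen : G.green μ D E = ∑ i, D i * (u + c) i := by
    refine green_eq_of_lap_eq hG hμ hD ?_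
    rw [← lapL_apply, map_add, lapL_apply, lapL_apply, hc, add_sub_cancel]
  have hdiff : G.green μ D E - ∑ i, D i * u i = ∑ e, G.grad c e * ψ e := by
    rw [hgreen, ← sum_mul_divergence, hψ, ← Finset.sum_sub_distrib]
    exact Finset.sum_congr rfl fun i _ => by simp only [Pi.add_apply]; ring
  rw [hdiff]
  calc (∑ e, G.grad c e * ψ e) ^ 2
      ≤ (∑ e, G.grad c e ^ 2 / μ e) * ∑ e, μ e * ψ e ^ 2 :=
        sq_sum_mul_le_sum_sq_div_mul_sum_mul_sq hμ _ _
    _ ≤ (∑ e, μ e * φ e ^ 2) * ∑ e, μ e * ψ e ^ 2 :=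
        mul_le_mul_of_nonneg_right (energy_le_of_lap_eq_divergence hμ (hc.trans hφ.symm))
          (Finset.sum_nonneg fun e _ => mul_nonneg (hμ e).le (sq_nonneg _))

end ResGraph

open ResGraph

theorem stmt12 (G : ResGraph) (hG : G.Connected) (D E : G.V → ℝ)
    (hD : ∑ x : G.V, D x = 0) (hE : ∑ x : G.V, E x = 0)
    (μ₀ : G.E → ℝ) (hμ₀ : ∀ e : G.E, 0 ≤ μ₀ e) :
    Filter.Tendsto (fun μ : G.E → ℝ => G.green μ D E)
      (nhdsWithin μ₀ {μ : G.E → ℝ | ∀ e : G.E, 0 < μ e})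
      (nhds ((G.contract {e : G.E | μ₀ e = 0}).green
        (fun e => μ₀ (G.cval {e : G.E | μ₀ e = 0} e))
        (G.pushVec {e : G.E | μ₀ e = 0} D) (G.pushVec {e : G.E | μ₀ e = 0} E))) := by
  set S : Set G.E := {e | μ₀ e = 0}
  have hμS : ∀ e : (G.contract S).E, 0 < μ₀ (G.cval S e) :=
    fun e => (hμ₀ _).lt_of_ne (Ne.symm e.2)
  have hGS := contract_connected hG S
  obtain ⟨w, hw⟩ := exists_lap_eq_of_sum_eq_zero hGS hμS (by rw [sum_pushVec, hE])
  set u : G.V → ℝ := fun i => w (G.cmk S i)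
  rw [green_eq_of_lap_eq hGS hμS (by rw [sum_pushVec, hD]) hw, sum_pushVec_mul]
  obtain ⟨φ, hφS, hφ⟩ := exists_divergence_eq_of_pushVec_eq_zero S (r := E - G.lap μ₀ u)
    (by rw [← pushVecL_apply, map_sub, pushVecL_apply, pushVecL_apply, pushVec_lap_comp_cmk, hw,
      sub_self])
  obtain ⟨d, hd⟩ := exists_lap_eq_of_sum_eq_zero hG (μ := 1) (fun _ => one_pos) hD
  -- `J` is the current of the limiting network: `φ` on the contracted edges `S`, and the
  -- current of the contracted network elsewhere.
  set J : G.E → ℝ := φ + fun e => G.grad u e / μ₀ e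
  have hJ : ∀ μ, G.divergence (J - fun e => G.grad u e / μ e) = E - G.lap μ u := fun μ => by
    rw [divergence_sub, divergence_add, hφ, ← lap_eq_divergence, ← lap_eq_divergence]
    abel
  have hdefect := tendsto_sum_mul_sub_div_sq (a := J) (b := G.grad u)
    (fun e he => grad_comp_cmk_of_mem w he) (fun e he => by simp [J, hφS e he])
  have hψ : Tendsto (fun μ : G.E → ℝ => ∑ e, μ e * G.grad d e ^ 2) (𝓝 μ₀) _ :=
    (continuous_finsetSum _ fun e _ => (continuous_apply e).mul continuous_const).tendsto μ₀
  refine tendsto_of_sq_sub_le (by simpa using (hdefect.mul hψ).mono_left nhdsWithin_le_nhds) ?_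
  filter_upwards [self_mem_nhdsWithin] with μ hμ
  exact sq_green_sub_le hG hμ hD (by simpa using (lap_eq_divergence 1 d).symm.trans hd) (hJ μ)
end
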